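/- arXiv:2510.27071 — 7 statements merged into one kernel-verified Lean document; each statement's English description precedes it below -/
import Mathlib

section
/- Let q be a prime power, let m, n, δ be positive integers with δ ≤ min(m,n), and let 𝒞 be a set of m×n matrices over 𝔽_q such that rank(A − B) ≥ δ for all distinct A, B ∈ 𝒞. Then |𝒞| ≤ q^{max(m,n)·(min(m,n) − δ + 1)} (the Singleton-like bound for rank metric codes). -/
open Matrix

lemma rank_le_of_zero_rows {F : Type} [Field F] {m n r : ℕ}
    (D : Matrix (Fin m) (Fin n) F) (hD : ∀ i : Fin m, (i : ℕ) < r → D i = 0) :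
    D.rank ≤ m - r := by
  classical
  set w : Fin m → F := fun i => if r ≤ (i : ℕ) then 1 else 0 with hw
  have hDeq : (Matrix.diagonal w) * D = D := by
    ext i j
    simp only [Matrix.diagonal_mul, hw]
    by_cases h : r ≤ (i : ℕ)
    · simp [h]
    · have h0 : D i = 0 := hD i (Nat.lt_of_not_le h)
      simp [h, h0]
  have hcard : Fintype.card {i : Fin m // r ≤ (i : ℕ)} ≤ m - r := by
    rcases lt_or_ge r m with hrm | hrm
    · have he : (Finset.univ.filter (fun i : Fin m => r ≤ (i : ℕ)))
          = Finset.Ici (⟨r, hrm⟩ : Fin m) := by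
        ext i; simp [Fin.le_def]
      rw [Fintype.card_subtype, he, Fin.card_Ici]
    · have hz : Fintype.card {i : Fin m // r ≤ (i : ℕ)} = 0 := by
        rw [Fintype.card_eq_zero_iff]
        exact ⟨fun ⟨i, hi⟩ => absurd (lt_of_lt_of_le i.2 hrm) (not_lt.mpr hi)⟩
      omega
  calc D.rank = ((Matrix.diagonal w) * D).rank := by rw [hDeq]
    _ ≤ (Matrix.diagonal w).rank := Matrix.rank_mul_le_left _ _
    _ = Fintype.card {i // w i ≠ 0} := Matrix.rank_diagonal w
    _ ≤ m - r := by
        have he : Fintype.card {i : Fin m // w i ≠ 0}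
            = Fintype.card {i : Fin m // r ≤ (i : ℕ)} :=
          Fintype.card_congr (Equiv.subtypeEquivRight (fun i => by simp [hw]))
        rw [he]; exact hcard

lemma singleton_bound_aux
    (F : Type) [Field F] [Fintype F] (m n δ : ℕ)
    (hδ : 0 < δ) (hδm : δ ≤ m)
    (C : Finset (Matrix (Fin m) (Fin n) F))
    (hC : ∀ A ∈ C, ∀ B ∈ C, A ≠ B → δ ≤ (A - B).rank) :
    C.card ≤ (Fintype.card F) ^ (n * (m - δ + 1)) := by
  classical
  set r : ℕ := m - δ + 1 with hr
  have hrm : r ≤ m := by omega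
  set f : Matrix (Fin m) (Fin n) F → (Fin r → Fin n → F) :=
    fun A => fun i j => A (Fin.castLE hrm i) j with hf
  have hinj : Set.InjOn f C := by
    intro A hA B hB hAB
    by_contra hne
    have hrank := hC A hA B hB hne
    have hzero : ∀ i : Fin m, (i : ℕ) < r → (A - B) i = 0 := by
      intro i hi
      funext j
      have := congrFun (congrFun hAB ⟨i, hi⟩) j
      simp only [hf] at this
      have hcast : Fin.castLE hrm (⟨(i : ℕ), hi⟩ : Fin r) = i := by
        ext; rfl
      rw [hcast] at this
      simpa [Matrix.sub_apply] using sub_eq_zero_of_eq this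
    have hle := rank_le_of_zero_rows (A - B) hzero
    omega
  calc C.card ≤ (Finset.univ : Finset (Fin r → Fin n → F)).card :=
        Finset.card_le_card_of_injOn f (fun a _ => Finset.mem_univ _) hinj
    _ = (Fintype.card F) ^ (n * r) := by
        simp [Fintype.card_fun, pow_mul, mul_comm]
    _ = (Fintype.card F) ^ (n * (m - δ + 1)) := by rw [hr]

/-- **Singleton-like bound for rank metric codes.**
Let `q` be a prime power (realized as the cardinality of a finite field `F`),
`m, n, δ` positive integers with `δ ≤ min m n`, and `C` a set of `m × n`
matrices over `F` such that `rank (A - B) ≥ δ` for all distinct `A, B ∈ C`.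
Then `|C| ≤ q ^ (max m n * (min m n - δ + 1))`. -/
theorem singleton_bound_rank_metric
    (F : Type) [Field F] [Fintype F] (m n δ : ℕ)
    (hm : 0 < m) (hn : 0 < n) (hδ : 0 < δ) (hδle : δ ≤ min m n)
    (C : Finset (Matrix (Fin m) (Fin n) F))
    (hC : ∀ A ∈ C, ∀ B ∈ C, A ≠ B → δ ≤ (A - B).rank) :
    C.card ≤ (Fintype.card F) ^ (max m n * (min m n - δ + 1)) := by
  classical
  rcases le_total m n with hmn | hnm
  · have := singleton_bound_aux F m n δ hδ (hδle.trans (min_le_left _ _)) C hC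
    rwa [max_eq_right hmn, min_eq_left hmn]
  · set C' : Finset (Matrix (Fin n) (Fin m) F) := C.image Matrix.transpose with hC'
    have hcard : C'.card = C.card := Finset.card_image_of_injective _
      (fun A B h => by simpa using congrArg Matrix.transpose h)
    have hC'prop : ∀ A ∈ C', ∀ B ∈ C', A ≠ B → δ ≤ (A - B).rank := by
      intro A hA B hB hne
      rw [hC', Finset.mem_image] at hA hB
      obtain ⟨A', hA', rfl⟩ := hA
      obtain ⟨B', hB', rfl⟩ := hB
      have hne' : A' ≠ B' := fun h => hne (by rw [h])
      have : (A'ᵀ - B'ᵀ) = (A' - B')ᵀ := by ext i j; simp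
      rw [this, Matrix.rank_transpose]
      exact hC A' hA' B' hB' hne'
    have := singleton_bound_aux F n m δ hδ (hδle.trans (min_le_right _ _)) C' hC'prop
    rw [hcard] at this
    rwa [max_eq_left hnm, min_eq_right hnm]
end

section
/- Let F be an m×n Ferrers diagram with column heights γ_1 ≤ ⋯ ≤ γ_n = m and let 1 ≤ δ ≤ n. For 0 ≤ i ≤ δ−1 set ν_i = Σ_{j=1}^{n−δ+1+i} max(γ_j − i, 0). Then for every prime power q, every [F, k, δ]_q Ferrers diagram rank metric code satisfies k ≤ min_{0 ≤ i ≤ δ−1} ν_i. -/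
open Matrix


/-- `C` is an `[F, k, δ]_q` Ferrers diagram rank metric code for the `m × n`
Ferrers diagram with column heights `γ 0 ≤ γ 1 ≤ ⋯ ≤ γ (n-1) = m`
(0-indexed; the dots of column `j` are the entries in rows `0, …, γ j - 1`):
`C` is a `k`-dimensional linear subspace of `m × n` matrices which are supported
on the dots of the diagram and whose nonzero members all have rank at least `δ`. -/
def IsFDRMC (F : Type) [Field F] (m n : ℕ) (γ : ℕ → ℕ) (k δ : ℕ)
    (C : Submodule F (Matrix (Fin m) (Fin n) F)) : Prop :=
  Module.finrank F C = k ∧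
  (∀ A ∈ C, ∀ (i : Fin m) (j : Fin n), γ (j : ℕ) ≤ (i : ℕ) → A i j = 0) ∧
  (∀ A ∈ C, A ≠ 0 → δ ≤ A.rank)

lemma rank_le_card_of_row_support {F : Type} [Field F] {m n : ℕ}
    (A : Matrix (Fin m) (Fin n) F) (s : Finset (Fin m))
    (h : ∀ r ∉ s, ∀ j, A r j = 0) : A.rank ≤ s.card := by
  classical
  let E : Matrix (Fin m) s F := fun r t => if r = (t : Fin m) then 1 else 0
  let A' : Matrix s (Fin n) F := A.submatrix (fun t => (t : Fin m)) id
  have hA : A = E * A' := by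
    ext r j
    rw [Matrix.mul_apply]
    by_cases hr : r ∈ s
    · rw [Finset.sum_eq_single_of_mem (⟨r, hr⟩ : s) (Finset.mem_univ _)]
      · simp [E, A']
      · intro t _ ht
        have : r ≠ (t : Fin m) := by
          intro hrt
          exact ht (Subtype.ext hrt.symm)
        simp [E, this]
    · rw [h r hr j]
      refine (Finset.sum_eq_zero ?_).symm
      intro t _
      have : r ≠ (t : Fin m) := fun hrt => hr (hrt ▸ t.2)
      simp [E, this]
  calc A.rank = (E * A').rank := by rw [← hA]
    _ ≤ A'.rank := Matrix.rank_mul_le_right E A'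
    _ ≤ Fintype.card s := Matrix.rank_le_card_height A'
    _ = s.card := Fintype.card_coe s

lemma rank_le_card_of_col_support {F : Type} [Field F] {m n : ℕ}
    (A : Matrix (Fin m) (Fin n) F) (s : Finset (Fin n))
    (h : ∀ j ∉ s, ∀ r, A r j = 0) : A.rank ≤ s.card := by
  rw [← Matrix.rank_transpose]
  exact rank_le_card_of_row_support Aᵀ s (fun j hj r => h j hj r)

lemma matrix_rank_add_le {F : Type} [Field F] {m n : ℕ}
    (A B : Matrix (Fin m) (Fin n) F) : (A + B).rank ≤ A.rank + B.rank := by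
  unfold Matrix.rank
  rw [Matrix.mulVecLin_add]
  have hle : LinearMap.range (A.mulVecLin + B.mulVecLin) ≤
      LinearMap.range A.mulVecLin ⊔ LinearMap.range B.mulVecLin := by
    rintro x ⟨v, rfl⟩
    exact Submodule.add_mem_sup ⟨v, rfl⟩ ⟨v, rfl⟩
  calc Module.finrank F (LinearMap.range (A.mulVecLin + B.mulVecLin))
      ≤ Module.finrank F ↥(LinearMap.range A.mulVecLin ⊔ LinearMap.range B.mulVecLin) :=
        Submodule.finrank_mono hle
    _ ≤ _ := Submodule.finrank_add_le_finrank_add_finrank _ _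

/-- **Upper bound on the dimension of Ferrers diagram rank metric codes**
(Etzion–Silberstein). For an `m × n` Ferrers diagram with column heights
`γ_1 ≤ ⋯ ≤ γ_n = m` (here 0-indexed) and `1 ≤ δ ≤ n`, every `[F, k, δ]_q`
Ferrers diagram rank metric code satisfies `k ≤ ν_i` for each `0 ≤ i ≤ δ - 1`,
where `ν_i = Σ_{j < n - δ + 1 + i} max (γ_j - i, 0)` is the number of dots
remaining after deleting the top `i` rows and the rightmost `δ - 1 - i` columns;
hence `k ≤ min_i ν_i`. -/
theorem fdrmc_dimension_upper_bound
    (F : Type) [Field F] [Fintype F] (m n δ k : ℕ) (γ : ℕ → ℕ)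
    (hm : 0 < m) (hn : 0 < n) (hδ : 1 ≤ δ) (hδn : δ ≤ n)
    (hγpos : ∀ j < n, 1 ≤ γ j)
    (hγmono : ∀ j₁ j₂, j₁ ≤ j₂ → j₂ < n → γ j₁ ≤ γ j₂)
    (hγtop : γ (n - 1) = m)
    (C : Submodule F (Matrix (Fin m) (Fin n) F))
    (hC : IsFDRMC F m n γ k δ C) :
    ∀ i < δ, k ≤ ∑ j ∈ Finset.range (n - δ + 1 + i), (γ j - i) := by
  classical
  obtain ⟨hk, hdots, hrank⟩ := hC
  intro i hi
  set L := n - δ + 1 + i with hL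
  have hLn : L ≤ n := by omega
  have hγle : ∀ j < n, γ j ≤ m := by
    intro j hj
    rw [← hγtop]
    exact hγmono j (n - 1) (by omega) (by omega)
  -- the target index type
  let cnt : Fin n → ℕ := fun j => if (j : ℕ) < L then γ (j : ℕ) - i else 0
  let σ : Type := (j : Fin n) × Fin (cnt j)
  -- the projection map
  let φ : C →ₗ[F] (σ → F) :=
    { toFun := fun c p => (c : Matrix (Fin m) (Fin n) F) ⟨(i + (p.2 : ℕ)) % m, Nat.mod_lt _ hm⟩ p.1
      map_add' := by intro a b; ext p; simp
      map_smul' := by intro a b; ext p; simp }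
  -- key fact: entries in the kept region determine membership
  have hφinj : Function.Injective φ := by
    rw [← LinearMap.ker_eq_bot, LinearMap.ker_eq_bot']
    intro c hc
    set A : Matrix (Fin m) (Fin n) F := (c : Matrix (Fin m) (Fin n) F) with hAdef
    have hzero : ∀ (r : Fin m) (j : Fin n), (j : ℕ) < L → i ≤ (r : ℕ) → A r j = 0 := by
      intro r j hjL hir
      by_cases hrg : γ (j : ℕ) ≤ (r : ℕ)
      · exact hdots A c.2 r j hrg
      · push_neg at hrg
        have h2 : (r : ℕ) - i < cnt j := by simp only [cnt, if_pos hjL]; omega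
        have h3 := congrFun hc ⟨j, ⟨(r : ℕ) - i, h2⟩⟩
        simp only [φ, LinearMap.coe_mk, AddHom.coe_mk, Pi.zero_apply] at h3
        have hmod : (i + ((r : ℕ) - i)) % m = (r : ℕ) := by
          rw [Nat.add_sub_cancel' hir, Nat.mod_eq_of_lt r.isLt]
        rw [show (⟨(i + ((r : ℕ) - i)) % m, Nat.mod_lt _ hm⟩ : Fin m) = r from Fin.ext hmod] at h3
        exact h3
    -- decompose A and bound its rank
    by_contra hcne
    have hAne : A ≠ 0 := by
      intro h0
      exact hcne (Subtype.ext h0)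
    have hδrank := hrank A c.2 hAne
    let A₁ : Matrix (Fin m) (Fin n) F := fun r j => if (r : ℕ) < i then A r j else 0
    let A₂ : Matrix (Fin m) (Fin n) F := A - A₁
    have hsplit : A = A₁ + A₂ := by simp [A₂]
    have hr1 : A₁.rank ≤ i := by
      have := rank_le_card_of_row_support A₁
        (Finset.univ.filter (fun r : Fin m => (r : ℕ) < i)) ?_
      · refine this.trans ?_
        have : (Finset.univ.filter (fun r : Fin m => (r : ℕ) < i)).card ≤
            (Finset.range i).card := by
          refine Finset.card_le_card_of_injOn (fun r : Fin m => (r : ℕ)) ?_ ?_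
          · intro r hr
            simp only [Finset.mem_coe, Finset.mem_filter, Finset.mem_univ, true_and] at hr
            show (r : ℕ) ∈ Finset.range i
            exact Finset.mem_range.mpr hr
          · intro a _ b _ hab
            exact Fin.ext hab
        simpa using this
      · intro r hr j
        simp only [Finset.mem_filter, Finset.mem_univ, true_and, not_lt] at hr
        simp [A₁, Nat.not_lt.mpr hr]
    have hr2 : A₂.rank ≤ δ - 1 - i := by
      have := rank_le_card_of_col_support A₂
        (Finset.univ.filter (fun j : Fin n => L ≤ (j : ℕ))) ?_
      · refine this.trans ?_
        have hcard : (Finset.univ.filter (fun j : Fin n => L ≤ (j : ℕ))).card ≤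
            (Finset.range (δ - 1 - i)).card := by
          refine Finset.card_le_card_of_injOn (fun j : Fin n => (j : ℕ) - L) ?_ ?_
          · intro j hj
            simp only [Finset.mem_coe, Finset.mem_filter, Finset.mem_univ, true_and] at hj
            have hjn := j.isLt
            show (j : ℕ) - L ∈ Finset.range (δ - 1 - i)
            rw [Finset.mem_range]
            omega
          · intro a ha b hb hab
            simp only [Finset.mem_coe, Finset.mem_filter, Finset.mem_univ, true_and] at ha hb
            have hab' : (a : ℕ) - L = (b : ℕ) - L := hab
            exact Fin.ext (by omega)
        simpa using hcard
      · intro j hj r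
        simp only [Finset.mem_filter, Finset.mem_univ, true_and, not_le] at hj
        by_cases hri : (r : ℕ) < i
        · show A r j - A₁ r j = 0; simp [A₁, hri]
        · push_neg at hri
          show A r j - A₁ r j = 0; simp [A₁, Nat.not_lt.mpr hri, hzero r j hj hri]
    have : A.rank ≤ δ - 1 := by
      calc A.rank = (A₁ + A₂).rank := by rw [← hsplit]
        _ ≤ A₁.rank + A₂.rank := matrix_rank_add_le A₁ A₂
        _ ≤ i + (δ - 1 - i) := Nat.add_le_add hr1 hr2
        _ ≤ δ - 1 := by omega
    omega
  -- dimension count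
  have hfin : Module.finrank F C ≤ Module.finrank F (σ → F) :=
    LinearMap.finrank_le_finrank_of_injective hφinj
  have hcardσ : Fintype.card σ = ∑ j ∈ Finset.range L, (γ j - i) := by
    rw [Fintype.card_sigma]
    simp only [Fintype.card_fin]
    have h1 : ∑ j : Fin n, cnt j =
        ∑ j ∈ Finset.range n, (if j < L then γ j - i else 0) :=
      Fin.sum_univ_eq_sum_range (fun j => if j < L then γ j - i else 0) n
    rw [h1, ← Finset.sum_subset (Finset.range_subset_range.mpr hLn)]
    · exact Finset.sum_congr rfl (fun x hx => if_pos (Finset.mem_range.mp hx))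
    · intro x _ hx
      exact if_neg (fun h => hx (Finset.mem_range.mpr h))
  rw [hk] at hfin
  rw [Module.finrank_fintype_fun_eq_card, hcardσ] at hfin
  exact hfin
end

section
/- Let F be an m×n Ferrers diagram with column heights γ_1 ≤ ⋯ ≤ γ_n = m, where m ≥ n and 1 ≤ δ ≤ n, and suppose each of the rightmost δ−1 columns of F has at least n dots, i.e. γ_j ≥ n for all n−δ+1 < j ≤ n. Then for every prime power q there exists an [F, Σ_{i=1}^{n−δ+1} γ_i, δ]_q Ferrers diagram rank metric code. -/
open Polynomial Module Matrix

section Ext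
theorem exists_finite_ext (F : Type) [Field F] [Fintype F] (M : ℕ) (hM : M ≠ 0) :
    ∃ (K : Type) (_ : Field K) (_ : Algebra F K) (_ : FiniteDimensional F K),
      Module.finrank F K = M := by
  classical
  obtain ⟨p, hchar⟩ := CharP.exists F
  haveI := hchar
  haveI hp : Fact p.Prime := ⟨CharP.char_is_prime F p⟩
  obtain ⟨f, -, hcard⟩ := FiniteField.card F p
  set q := Fintype.card F with hq_def
  have hq : 1 < q := Fintype.one_lt_card
  set N := q ^ M with hN_def
  have hN : N = p ^ ((f : ℕ) * M) := by rw [hN_def, hcard, ← pow_mul]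
  have hfM : (f : ℕ) * M ≠ 0 := Nat.mul_ne_zero (f.pos.ne') hM
  set g : F[X] := X ^ N - X with hg_def
  have gne : g ≠ 0 := FiniteField.X_pow_card_pow_sub_X_ne_zero F hM hq
  refine ⟨g.SplittingField, inferInstance, inferInstance, inferInstance, ?_⟩
  set K := g.SplittingField
  haveI : CharP K p := charP_of_injective_algebraMap (algebraMap F K).injective p
  haveI : Finite K := Module.finite_of_finite F
  haveI : Fintype K := Fintype.ofFinite K
  have sep : g.Separable := galois_poly_separable p N (hN ▸ dvd_pow_self p hfM)
  have key : Fintype.card (g.rootSet K) = g.natDegree :=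
    card_rootSet_eq_natDegree sep (SplittingField.splits g)
  have hdeg : g.natDegree = N := FiniteField.X_pow_card_pow_sub_X_natDegree_eq F hM hq
  have hfix : ∀ x : K, x ^ N = x := by
    have hcomm : ∀ r : F, iterateFrobenius K p ((f : ℕ) * M) (algebraMap F K r)
        = algebraMap F K r := by
      intro r
      rw [iterateFrobenius_def, ← hN, ← map_pow, FiniteField.pow_card_pow]
    set φ : K →ₐ[F] K := { toRingHom := iterateFrobenius K p ((f : ℕ) * M),
                           commutes' := hcomm } with hφdef
    have hφ : ∀ x : K, φ x = x ^ N := by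
      intro x
      show iterateFrobenius K p ((f : ℕ) * M) x = x ^ N
      rw [iterateFrobenius_def, ← hN]
    have htop : (⊤ : Subalgebra F K) ≤ AlgHom.equalizer φ (AlgHom.id F K) := by
      rw [← Polynomial.IsSplittingField.adjoin_rootSet K g]
      refine Algebra.adjoin_le ?_
      intro x hx
      have h0 := (mem_rootSet_of_ne gne).mp hx
      simp only [hg_def, map_sub, map_pow, aeval_X] at h0
      have hxx : x ^ N = x := sub_eq_zero.mp h0
      refine (AlgHom.mem_equalizer φ (AlgHom.id F K) x).mpr ?_
      rw [hφ x, hxx, AlgHom.id_apply]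
    intro x
    have hmem := htop (Algebra.mem_top (A := K) (x := x))
    have hx := (AlgHom.mem_equalizer φ (AlgHom.id F K) x).mp hmem
    rw [hφ x, AlgHom.id_apply] at hx
    exact hx
  have huniv : g.rootSet K = Set.univ := by
    rw [Set.eq_univ_iff_forall]
    intro x
    rw [mem_rootSet_of_ne gne]
    simp only [hg_def, map_sub, map_pow, aeval_X]
    rw [hfix x, sub_self]
  have : Fintype.card K = N := by
    rw [← hdeg, ← key]
    exact Fintype.card_congr ((Equiv.setCongr huniv).trans (Equiv.Set.univ K)).symm
  rw [card_eq_pow_finrank (K := F) (V := K)] at this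
  exact Nat.pow_right_injective hq this
end Ext

section QLin

variable (F : Type) [Field F] [Fintype F] {K : Type} [Field K] [Algebra F K]

theorem frob_add (e : ℕ) (x y : K) :
    (x + y) ^ Fintype.card F ^ e = x ^ Fintype.card F ^ e + y ^ Fintype.card F ^ e := by
  obtain ⟨p, hchar⟩ := CharP.exists F
  haveI := hchar
  haveI hp : Fact p.Prime := ⟨CharP.char_is_prime F p⟩
  haveI : CharP K p := charP_of_injective_algebraMap (algebraMap F K).injective p
  obtain ⟨f, -, hcard⟩ := FiniteField.card F p
  rw [hcard, ← pow_mul, add_pow_char_pow]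

theorem frob_smul (e : ℕ) (s : F) (x : K) :
    (s • x) ^ Fintype.card F ^ e = s • x ^ Fintype.card F ^ e := by
  rw [Algebra.smul_def, Algebra.smul_def, mul_pow, ← map_pow,
    FiniteField.pow_card_pow]

/-- The `F`-linear map `x ↦ ∑ i, c i * x ^ q ^ i` on `K`. -/
noncomputable def qlin {t : ℕ} (c : Fin t → K) : K →ₗ[F] K where
  toFun x := ∑ i : Fin t, c i * x ^ Fintype.card F ^ (i : ℕ)
  map_add' x y := by
    rw [← Finset.sum_add_distrib]
    refine Finset.sum_congr rfl fun i _ => ?_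
    rw [frob_add F, mul_add]
  map_smul' s x := by
    simp only [RingHom.id_apply, Finset.smul_sum]
    refine Finset.sum_congr rfl fun i _ => ?_
    rw [frob_smul F, mul_smul_comm]

theorem qlin_apply {t : ℕ} (c : Fin t → K) (x : K) :
    qlin F c x = ∑ i : Fin t, c i * x ^ Fintype.card F ^ (i : ℕ) := rfl

theorem finrank_ker_qlin_le [FiniteDimensional F K] {t : ℕ} (ht : t ≠ 0)
    {c : Fin t → K} (hc : c ≠ 0) :
    finrank F (LinearMap.ker (qlin F c)) ≤ t - 1 := by
  classical
  haveI : Finite K := Module.finite_of_finite F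
  haveI : Fintype K := Fintype.ofFinite K
  set q := Fintype.card F with hq_def
  have hq : 1 < q := Fintype.one_lt_card
  -- the polynomial
  set P : K[X] := ∑ i : Fin t, C (c i) * X ^ q ^ (i : ℕ) with hP_def
  obtain ⟨i₀, hi₀⟩ : ∃ i₀, c i₀ ≠ 0 := by
    by_contra h
    push_neg at h
    exact hc (funext h)
  have hPcoeff : P.coeff (q ^ (i₀ : ℕ)) = c i₀ := by
    rw [hP_def, Polynomial.finset_sum_coeff]
    rw [Finset.sum_eq_single i₀]
    · simp
    · intro i _ hne
      rw [Polynomial.coeff_C_mul, Polynomial.coeff_X_pow, if_neg, mul_zero]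
      exact fun h => hne (Fin.ext (Nat.pow_right_injective hq h).symm)
    · simp
  have hPne : P ≠ 0 := fun h => hi₀ (by rw [← hPcoeff, h, Polynomial.coeff_zero])
  have hPdeg : P.natDegree ≤ q ^ (t - 1) := by
    refine Polynomial.natDegree_sum_le_of_forall_le _ _ fun i _ => ?_
    refine le_trans (Polynomial.natDegree_C_mul_le _ _) ?_
    rw [Polynomial.natDegree_X_pow]
    exact Nat.pow_le_pow_right (le_of_lt hq) (by omega)
  -- kernel elements are roots of P
  have hker : ∀ x : K, x ∈ LinearMap.ker (qlin F c) → x ∈ P.roots.toFinset := by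
    intro x hx
    rw [Multiset.mem_toFinset, Polynomial.mem_roots hPne]
    have : qlin F c x = 0 := hx
    rw [qlin_apply] at this
    simp only [Polynomial.IsRoot, hP_def, Polynomial.eval_finset_sum,
      Polynomial.eval_mul, Polynomial.eval_C, Polynomial.eval_pow, Polynomial.eval_X]
    exact this
  have hcard : Fintype.card (LinearMap.ker (qlin F c)) ≤ q ^ (t - 1) := by
    have h1 : Fintype.card (LinearMap.ker (qlin F c)) ≤ P.roots.toFinset.card := by
      classical
      rw [← Fintype.card_coe]
      refine Fintype.card_le_of_injective
        (fun (x : LinearMap.ker (qlin F c)) => (⟨(x : K), hker x.1 x.2⟩ : P.roots.toFinset)) ?_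
      intro a b hab
      exact Subtype.ext (Subtype.mk_eq_mk.mp hab)
    refine le_trans h1 (le_trans (Multiset.toFinset_card_le _) ?_)
    exact le_trans (Polynomial.card_roots' P) hPdeg
  rw [card_eq_pow_finrank (K := F) (V := LinearMap.ker (qlin F c))] at hcard
  exact (Nat.pow_le_pow_iff_right hq).mp hcard

end QLin



/-- **Etzion–Gorla–Ravagnani–Wachter-Zeh construction.**
Let `F` be an `m × n` Ferrers diagram with column heights `γ_1 ≤ ⋯ ≤ γ_n = m`
(here 0-indexed), `m ≥ n`, `1 ≤ δ ≤ n`, and suppose each of the rightmost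
`δ - 1` columns has at least `n` dots. Then for every prime power `q`
(realized as the cardinality of a finite field) there exists an
`[F, Σ_{i=1}^{n-δ+1} γ_i, δ]_q` Ferrers diagram rank metric code. -/
theorem fdrmc_construction_rightmost_columns_full
    (F : Type) [Field F] [Fintype F] (m n δ : ℕ) (γ : ℕ → ℕ)
    (hmn : n ≤ m) (hn : 0 < n) (hδ : 1 ≤ δ) (hδn : δ ≤ n)
    (hγpos : ∀ j < n, 1 ≤ γ j)
    (hγmono : ∀ j₁ j₂, j₁ ≤ j₂ → j₂ < n → γ j₁ ≤ γ j₂)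
    (hγtop : γ (n - 1) = m)
    (hright : ∀ j, n - δ + 1 ≤ j → j < n → n ≤ γ j) :
    ∃ C : Submodule F (Matrix (Fin m) (Fin n) F),
      IsFDRMC F m n γ (∑ j ∈ Finset.range (n - δ + 1), γ j) δ C := by
  classical
  obtain ⟨K, _, _, _, hrankK⟩ := exists_finite_ext F (max (γ (n - δ)) n) (by omega)
  set q := Fintype.card F with hq_def
  set m' := max (γ (n - δ)) n with hm'_def
  set t := n - δ + 1 with ht_def
  set k := ∑ j ∈ Finset.range t, γ j with hk_def
  have htn : t ≤ n := by omega
  have hm'n : n ≤ m' := le_max_right _ _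
  have hγm : ∀ j < n, γ j ≤ m := by
    intro j hj
    calc γ j ≤ γ (n-1) := hγmono j (n-1) (by omega) (by omega)
    _ = m := hγtop
  have hm'm : m' ≤ m := by
    refine max_le ?_ hmn
    exact hγm _ (by omega)
  have hγfree : ∀ j, j < t → γ j ≤ m' := fun j hj =>
    le_trans (hγmono j (n - δ) (by omega) (by omega)) (le_max_left _ _)
  have hγdes : ∀ j, t ≤ j → j < n → m' ≤ γ j := fun j h1 h2 =>
    max_le (hγmono (n - δ) j (by omega) h2) (hright j (by omega) h2)
  let b : Basis (Fin m') F K := Module.finBasisOfFinrankEq F K hrankK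
  let g : Fin n → K := fun j => b (Fin.castLE hm'n j)
  -- the matrix associated to a coefficient vector
  let mat : (Fin t → K) → Matrix (Fin m) (Fin n) F := fun c =>
    Matrix.of fun i j =>
      if h : (i : ℕ) < m' then b.repr (qlin F c (g j)) ⟨i, h⟩ else 0
  have qlin_add : ∀ (c d : Fin t → K) (x : K),
      qlin F (c + d) x = qlin F c x + qlin F d x := by
    intro c d x
    rw [qlin_apply, qlin_apply, qlin_apply, ← Finset.sum_add_distrib]
    exact Finset.sum_congr rfl fun i _ => by rw [Pi.add_apply, add_mul]
  have qlin_smul : ∀ (s : F) (c : Fin t → K) (x : K),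
      qlin F (s • c) x = s • qlin F c x := by
    intro s c x
    rw [qlin_apply, qlin_apply, Finset.smul_sum]
    exact Finset.sum_congr rfl fun i _ => by
      rw [Pi.smul_apply, smul_mul_assoc]
  let Θ : (Fin t → K) →ₗ[F] Matrix (Fin m) (Fin n) F :=
    { toFun := mat
      map_add' := by
        intro c d
        ext i j
        simp only [mat, Matrix.of_apply, Matrix.add_apply]
        split
        · rw [qlin_add, map_add, Finsupp.add_apply]
        · rw [add_zero]
      map_smul' := by
        intro s c
        ext i j
        simp only [mat, Matrix.of_apply, Matrix.smul_apply, RingHom.id_apply]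
        split
        · rw [qlin_smul, _root_.map_smul, Finsupp.smul_apply, smul_eq_mul]
        · rw [smul_zero]
      }
  -- extension-by-zero of coordinates
  let ι : (Fin m' → F) →ₗ[F] (Fin m → F) :=
    { toFun := fun v i => if h : (i : ℕ) < m' then v ⟨i, h⟩ else 0
      map_add' := by
        intro v w
        funext i
        simp only [Pi.add_apply]
        split
        · rfl
        · rw [add_zero]
      map_smul' := by
        intro s v
        funext i
        simp only [Pi.smul_apply, RingHom.id_apply]
        split
        · rfl
        · rw [smul_zero] }
  have hιinj : Function.Injective ι := by
    intro v w hvw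
    funext l
    have h2 := congrFun hvw ⟨(l : ℕ), lt_of_lt_of_le l.2 hm'm⟩
    simp only [ι, LinearMap.coe_mk, AddHom.coe_mk, dif_pos l.2, Fin.eta] at h2
    exact h2
  let ιe : K →ₗ[F] (Fin m → F) := ι.comp (b.equivFun : K ≃ₗ[F] (Fin m' → F)).toLinearMap
  have hιeinj : Function.Injective ιe := by
    have hco : ⇑ιe = ⇑ι ∘ ⇑b.equivFun := rfl
    rw [hco]
    exact hιinj.comp b.equivFun.injective
  have hcols : ∀ (c : Fin t → K), (mat c)ᵀ = fun j => ιe (qlin F c (g j)) := by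
    intro c
    funext j i
    show (if h : (i : ℕ) < m' then b.repr (qlin F c (g j)) ⟨i, h⟩ else 0)
      = (if h : (i : ℕ) < m' then b.equivFun (qlin F c (g j)) ⟨i, h⟩ else 0)
    split
    · rw [Basis.equivFun_apply]
    · rfl
  have hgind : LinearIndependent F g :=
    b.linearIndependent.comp (Fin.castLE hm'n) (Fin.castLE_injective hm'n)
  have hrank_ge : ∀ c : Fin t → K, c ≠ 0 → δ ≤ (mat c).rank := by
    intro c hc
    have e1 : (mat c).rank = finrank F (Submodule.span F (Set.range ((mat c)ᵀ))) :=
      Matrix.rank_eq_finrank_span_cols _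
    set G : Submodule F K := Submodule.span F (Set.range g) with hG_def
    have hGrank : finrank F G = n := by
      rw [hG_def, finrank_span_eq_card hgind, Fintype.card_fin]
    have e2 : Set.range ((mat c)ᵀ) = ιe '' Set.range (fun j => qlin F c (g j)) := by
      rw [hcols c]
      exact Set.range_comp ιe (fun j => qlin F c (g j))
    have e3 : Set.range (fun j => qlin F c (g j)) = qlin F c '' Set.range g :=
      Set.range_comp (qlin F c) g
    have e4 : Submodule.span F (Set.range ((mat c)ᵀ))
        = Submodule.map ιe (Submodule.map (qlin F c) G) := by
      rw [e2, e3, hG_def, Submodule.map_span, Submodule.map_span, Set.image_image]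
    set ψ : G →ₗ[F] K := (qlin F c).domRestrict G with hψ_def
    have e5 : LinearMap.range ψ = Submodule.map (qlin F c) G :=
      LinearMap.range_domRestrict G (qlin F c)
    have e6 : finrank F (LinearMap.range ψ) + finrank F (LinearMap.ker ψ)
        = finrank F G := LinearMap.finrank_range_add_finrank_ker ψ
    have hkerψ : finrank F (LinearMap.ker ψ) ≤ t - 1 := by
      let u : LinearMap.ker ψ →ₗ[F] K := G.subtype.comp (LinearMap.ker ψ).subtype
      have hu : ∀ y : LinearMap.ker ψ, qlin F c (u y) = 0 := by
        intro y
        have := y.2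
        rw [LinearMap.mem_ker] at this
        exact this
      let v : LinearMap.ker ψ →ₗ[F] LinearMap.ker (qlin F c) :=
        LinearMap.codRestrict (LinearMap.ker (qlin F c)) u
          (fun y => LinearMap.mem_ker.mpr (hu y))
      have hvinj : Function.Injective v := by
        intro a a' haa
        have h1 : ((v a : K)) = ((v a' : K)) := congrArg Subtype.val haa
        have h2 : ((a : G) : K) = ((a' : G) : K) := h1
        exact Subtype.ext (Subtype.ext h2)
      refine le_trans (LinearMap.finrank_le_finrank_of_injective hvinj) ?_
      exact finrank_ker_qlin_le F (by omega) hc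
    -- conclude
    have e7 : finrank F (Submodule.map (qlin F c) G) = finrank F (LinearMap.range ψ) := by
      rw [e5]
    have e8 : finrank F (Submodule.map ιe (Submodule.map (qlin F c) G))
        = finrank F (Submodule.map (qlin F c) G) :=
      (LinearEquiv.finrank_eq
        (Submodule.equivMapOfInjective ιe hιeinj (Submodule.map (qlin F c) G))).symm
    rw [e1, e4, e8, e7]
    omega
  -- the support submodules
  let jn : Fin t → Fin n := fun j => ⟨(j : ℕ), by omega⟩
  let V : Fin t → Submodule F K := fun j =>
    { carrier := {x : K | ∀ i : Fin m', γ (j : ℕ) ≤ (i : ℕ) → b.repr x i = 0}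
      add_mem' := by
        intro x y hx hy i hi
        rw [map_add, Finsupp.add_apply, hx i hi, hy i hi, add_zero]
      zero_mem' := by
        intro i hi
        rw [map_zero, Finsupp.zero_apply]
      smul_mem' := by
        intro s x hx i hi
        rw [_root_.map_smul, Finsupp.smul_apply, hx i hi, smul_zero] }
  have hVmem : ∀ (j : Fin t) (x : K), x ∈ V j ↔
      (∀ i : Fin m', γ (j : ℕ) ≤ (i : ℕ) → b.repr x i = 0) := fun j x => Iff.rfl
  have hVrank : ∀ j : Fin t, γ (j : ℕ) ≤ finrank F (V j) := by
    intro j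
    have hle : γ (j : ℕ) ≤ m' := hγfree _ j.2
    let w : Fin (γ (j : ℕ)) → K := fun l => b (Fin.castLE hle l)
    have hwind : LinearIndependent F w :=
      b.linearIndependent.comp (Fin.castLE hle) (Fin.castLE_injective hle)
    have hwmem : ∀ l, w l ∈ V j := by
      intro l i hi
      show b.repr (b (Fin.castLE hle l)) i = 0
      rw [Basis.repr_self]
      refine Finsupp.single_eq_of_ne ?_
      intro hcontra
      have : (l : ℕ) = (i : ℕ) := (congrArg Fin.val hcontra).symm
      omega
    have h1 : finrank F (Submodule.span F (Set.range w)) = γ (j : ℕ) := by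
      rw [finrank_span_eq_card hwind, Fintype.card_fin]
    rw [← h1]
    refine Submodule.finrank_mono ?_
    rw [Submodule.span_le]
    rintro _ ⟨l, rfl⟩
    exact hwmem l
  -- the evaluation conditions
  let Elin : Fin t → ((Fin t → K) →ₗ[F] K) := fun j =>
    { toFun := fun c => qlin F c (g (jn j))
      map_add' := fun c d => qlin_add c d _
      map_smul' := fun s c => qlin_smul s c _ }
  let Φ : (Fin t → K) →ₗ[F] (∀ j : Fin t, K ⧸ V j) :=
    LinearMap.pi (fun j => (V j).mkQ.comp (Elin j))
  set 𝓕 : Submodule F (Fin t → K) := LinearMap.ker Φ with h𝓕_def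
  -- dimension count
  have hk𝓕 : k ≤ finrank F 𝓕 := by
    have h1 : finrank F (Fin t → K) = t * m' := by
      rw [Module.finrank_pi_fintype F]
      simp only [hrankK]
      rw [Finset.sum_const, Finset.card_univ, Fintype.card_fin, smul_eq_mul]
    have h2 : finrank F (∀ j : Fin t, K ⧸ V j) = ∑ j : Fin t, finrank F (K ⧸ V j) :=
      Module.finrank_pi_fintype F
    have h3 : ∀ j : Fin t, finrank F (K ⧸ V j) ≤ m' - γ (j : ℕ) := by
      intro j
      have hq := Submodule.finrank_quotient_add_finrank (V j)
      rw [hrankK] at hq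
      have := hVrank j
      omega
    have h4 : finrank F (LinearMap.range Φ) ≤ ∑ j : Fin t, (m' - γ (j : ℕ)) := by
      refine le_trans (Submodule.finrank_le _) ?_
      rw [h2]
      exact Finset.sum_le_sum fun j _ => h3 j
    have h5 : finrank F (LinearMap.range Φ) + finrank F 𝓕 = t * m' := by
      rw [h𝓕_def, ← h1]
      exact LinearMap.finrank_range_add_finrank_ker Φ
    have h6 : ∑ j : Fin t, (m' - γ (j : ℕ)) + k = t * m' := by
      have hk' : k = ∑ j : Fin t, γ (j : ℕ) := by
        rw [hk_def, ← Fin.sum_univ_eq_sum_range]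
      rw [hk', ← Finset.sum_add_distrib]
      have : ∀ j : Fin t, m' - γ (j : ℕ) + γ (j : ℕ) = m' := by
        intro j
        have := hγfree _ j.2
        omega
      rw [Finset.sum_congr rfl fun j _ => this j]
      rw [Finset.sum_const, Finset.card_univ, Fintype.card_fin, smul_eq_mul]
    omega
  -- an exactly k-dimensional subspace of 𝓕
  let β := Module.finBasis F 𝓕
  let w' : Fin k → (Fin t → K) := fun i => ((β (Fin.castLE hk𝓕 i)) : (Fin t → K))
  have hw'ind : LinearIndependent F w' := by
    refine LinearIndependent.map' ?_ 𝓕.subtype (Submodule.ker_subtype 𝓕)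
    exact β.linearIndependent.comp (Fin.castLE hk𝓕) (Fin.castLE_injective hk𝓕)
  set W : Submodule F (Fin t → K) := Submodule.span F (Set.range w') with hW_def
  have hWle : W ≤ 𝓕 := by
    rw [hW_def, Submodule.span_le]
    rintro _ ⟨i, rfl⟩
    exact (β (Fin.castLE hk𝓕 i)).2
  have hWrank : finrank F W = k := by
    rw [hW_def, finrank_span_eq_card hw'ind, Fintype.card_fin]
  -- injectivity of Θ
  have hΘinj : Function.Injective Θ := by
    rw [← LinearMap.ker_eq_bot]
    refine (Submodule.eq_bot_iff _).mpr fun c hc => ?_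
    by_contra hne
    have h1 := hrank_ge c hne
    have h2 : mat c = 0 := hc
    rw [h2, Matrix.rank_zero] at h1
    omega
  refine ⟨Submodule.map Θ W, ?_, ?_, ?_⟩
  · -- dimension
    have e := LinearEquiv.finrank_eq (Submodule.equivMapOfInjective Θ hΘinj W)
    rw [← e, hWrank]
  · -- support
    rintro A ⟨c, hcW, rfl⟩ i j hij
    show (if h : (i : ℕ) < m' then b.repr (qlin F c (g j)) ⟨i, h⟩ else 0) = 0
    split
    case isTrue h =>
      by_cases hjt : (j : ℕ) < t
      · have hc𝓕 : c ∈ 𝓕 := hWle hcW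
        have h0 : Φ c = 0 := hc𝓕
        have h1 : (V ⟨(j : ℕ), hjt⟩).mkQ (Elin ⟨(j : ℕ), hjt⟩ c) = 0 :=
          congrFun h0 ⟨(j : ℕ), hjt⟩
        rw [Submodule.mkQ_apply, Submodule.Quotient.mk_eq_zero] at h1
        have h2 : qlin F c (g j) ∈ V ⟨(j : ℕ), hjt⟩ := h1
        exact h2 ⟨(i : ℕ), h⟩ hij
      · exfalso
        have := hγdes (j : ℕ) (by omega) j.2
        omega
    case isFalse h => rfl
  · -- minimum rank
    rintro A ⟨c, hcW, rfl⟩ hAne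
    have hcne : c ≠ 0 := by
      rintro rfl
      exact hAne (map_zero Θ)
    exact hrank_ge c hcne
end

section
/- Let F be an m×n Ferrers diagram with column heights γ_1 ≤ ⋯ ≤ γ_n = m, where m ≥ n and 2 ≤ δ ≤ n. Set l = n − δ + 1 and let ε = Σ_{j=l+1}^{n} (m − γ_j) be the number of dots missing from the rightmost δ−1 columns of F. If γ_i ≤ γ_{l+1} − ε·(l+1−i) for all 1 ≤ i ≤ l, then for every prime power q there exists an [F, Σ_{i=1}^{l} γ_i, δ]_q Ferrers diagram rank metric code. -/
set_option linter.unusedSectionVars false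
set_option linter.unusedVariables false
set_option maxHeartbeats 1600000
open Module Submodule Polynomial Finset Matrix


noncomputable section AGLaux

variable {F V : Type*} [Field F] [AddCommGroup V] [Module F V] [FiniteDimensional F V]

private lemma agl_between_aux (W : Submodule F V) :
    ∀ (k : ℕ) (S : Submodule F V), S ≤ W → ∀ d : ℕ, finrank F S + k = d →
      d ≤ finrank F W → ∃ U : Submodule F V, S ≤ U ∧ U ≤ W ∧ finrank F U = d := by
  intro k
  induction k with
  | zero => exact fun S hSW d hd _ => ⟨S, le_rfl, hSW, by omega⟩
  | succ k ih =>
    intro S hSW d hd hdW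
    have hlt : S < W := by
      rcases lt_or_eq_of_le hSW with h | h
      · exact h
      · exfalso
        have : finrank F S = finrank F W := by rw [h]
        omega
    obtain ⟨x, hxW, hxS⟩ := SetLike.exists_of_lt hlt
    have hx0 : x ≠ 0 := fun h => hxS (h ▸ S.zero_mem)
    have hxS' : x ∈ S ⊔ (F ∙ x) :=
      (le_sup_right : (F ∙ x) ≤ S ⊔ (F ∙ x)) (Submodule.mem_span_singleton_self x)
    have h1 : S < S ⊔ (F ∙ x) :=
      lt_of_le_of_ne le_sup_left (fun h => hxS (h ▸ hxS'))
    have hS'le : S ⊔ (F ∙ x) ≤ W :=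
      sup_le hSW ((Submodule.span_singleton_le_iff_mem x W).2 hxW)
    have h2 : finrank F ↥(S ⊔ (F ∙ x)) ≤ finrank F S + 1 := by
      have := Submodule.finrank_add_le_finrank_add_finrank S (F ∙ x)
      rwa [finrank_span_singleton hx0] at this
    have h3 : finrank F ↥(S ⊔ (F ∙ x)) = finrank F S + 1 := by
      have := Submodule.finrank_lt_finrank_of_lt h1
      omega
    obtain ⟨U, hU1, hU2, hU3⟩ := ih (S ⊔ (F ∙ x)) hS'le d (by omega) hdW
    exact ⟨U, le_trans le_sup_left hU1, hU2, hU3⟩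

private lemma agl_between (S W : Submodule F V) (hSW : S ≤ W) (d : ℕ)
    (h1 : finrank F S ≤ d) (h2 : d ≤ finrank F W) :
    ∃ U : Submodule F V, S ≤ U ∧ U ≤ W ∧ finrank F U = d :=
  agl_between_aux W (d - finrank F S) S hSW d (by omega) h2

/-- downward chain completion -/
private lemma agl_chain (N : ℕ) (Cc : ℕ → Submodule F V) (d : ℕ → ℕ)
    (hCmono : ∀ i, i < N → Cc (i + 1) ≤ Cc i)
    (hCd : ∀ i, i ≤ N → finrank F (Cc i) ≤ d i)
    (hd : ∀ i, i < N → d (i + 1) ≤ d i)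
    (hd0 : d 0 ≤ finrank F V) :
    ∃ U : ℕ → Submodule F V, (∀ i, i < N → U (i + 1) ≤ U i) ∧
      (∀ i, i ≤ N → Cc i ≤ U i) ∧ (∀ i, i ≤ N → finrank F (U i) = d i) := by
  induction N with
  | zero =>
    obtain ⟨U0, hU1, _, hU3⟩ := agl_between (Cc 0) ⊤ le_top (d 0) (hCd 0 le_rfl)
      (by simpa [finrank_top] using hd0)
    refine ⟨fun _ => U0, by omega, ?_, ?_⟩
    · intro i hi; interval_cases i; exact hU1
    · intro i hi; interval_cases i; exact hU3
  | succ N ih =>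
    obtain ⟨U, hUm, hUC, hUr⟩ := ih (fun i hi => hCmono i (by omega))
      (fun i hi => hCd i (by omega)) (fun i hi => hd i (by omega))
    have hCN : Cc (N + 1) ≤ U N :=
      le_trans (hCmono N (by omega)) (hUC N le_rfl)
    obtain ⟨UN, hN1, hN2, hN3⟩ := agl_between (Cc (N + 1)) (U N) hCN (d (N + 1))
      (hCd (N + 1) le_rfl) (by rw [hUr N le_rfl]; exact hd N (by omega))
    refine ⟨fun i => if i ≤ N then U i else UN, ?_, ?_, ?_⟩
    · intro i hi
      by_cases h : i + 1 ≤ N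
      · simp only [h, if_pos, if_pos (by omega : i ≤ N)]
        exact hUm i (by omega)
      · have hiN : i ≤ N := by omega
        have : ¬ (i + 1 ≤ N) := h
        simp only [this, if_neg, if_pos hiN, if_false]
        have : i = N := by omega
        subst this
        exact hN2
    · intro i hi
      by_cases h : i ≤ N
      · simpa [h] using hUC i h
      · have : i = N + 1 := by omega
        subst this
        simpa [h] using hN1
    · intro i hi
      by_cases h : i ≤ N
      · show finrank F ↥(if i ≤ N then U i else UN) = d i
        rw [if_pos h]; exact hUr i h
      · have : i = N + 1 := by omega
        subst this
        show finrank F ↥(if N + 1 ≤ N then U (N + 1) else UN) = d (N + 1)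
        rw [if_neg h]; exact hN3

private lemma agl_antitone {N : ℕ} {U : ℕ → Submodule F V}
    (h : ∀ i, i < N → U (i + 1) ≤ U i) :
    ∀ i j, i ≤ j → j ≤ N → U j ≤ U i := by
  intro i j hij hjN
  induction j with
  | zero => have : i = 0 := by omega
            subst this; exact le_rfl
  | succ j ihj =>
    rcases Nat.lt_or_ge i (j + 1) with hlt | hge
    · exact le_trans (h j (by omega)) (ihj (by omega) (by omega))
    · have : i = j + 1 := by omega
      subst this; exact le_rfl

private lemma agl_finrank_sup_le {ι : Type*} [DecidableEq ι] (s : Finset ι)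
    (W : ι → Submodule F V) (b : ι → ℕ) (h : ∀ i ∈ s, finrank F (W i) ≤ b i) :
    finrank F ↥(s.sup W) ≤ ∑ i ∈ s, b i := by
  classical
  induction s using Finset.induction with
  | empty => simp
  | @insert a s ha ih =>
    rw [Finset.sup_insert, Finset.sum_insert ha]
    refine le_trans (Submodule.finrank_add_le_finrank_add_finrank _ _) ?_
    exact add_le_add (h a (Finset.mem_insert_self a s))
      (ih fun i hi => h i (Finset.mem_insert_of_mem hi))

end AGLaux


noncomputable section AGLaux2

variable {F V : Type*} [Field F] [AddCommGroup V] [Module F V] [FiniteDimensional F V]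

private lemma agl_finrank_pi {l : ℕ} (W : Fin l → Submodule F V) :
    finrank F ↥(Submodule.pi Set.univ W) = ∑ t, finrank F ↥(W t) := by
  let e : ↥(Submodule.pi Set.univ W) ≃ₗ[F] ((t : Fin l) → ↥(W t)) :=
    { toFun := fun x t => ⟨x.1 t, x.2 t (Set.mem_univ t)⟩
      map_add' := fun x y => rfl
      map_smul' := fun c x => rfl
      invFun := fun y => ⟨fun t => (y t).1, fun t _ => (y t).2⟩
      left_inv := fun x => rfl
      right_inv := fun y => rfl }
  rw [e.finrank_eq, Module.finrank_pi_fintype]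

/-- span of a prefix of a basis -/
private lemma agl_prefix_finrank {mm : ℕ} (b : Basis (Fin mm) F V) (c : ℕ) (hc : c ≤ mm) :
    finrank F ↥(span F (⇑b '' {r : Fin mm | (r : ℕ) < c})) = c := by
  have hset : ⇑b '' {r : Fin mm | (r : ℕ) < c} =
      Set.range (fun r : Fin c => b (Fin.castLE hc r)) := by
    ext x
    constructor
    · rintro ⟨r, hr, rfl⟩
      exact ⟨⟨(r : ℕ), hr⟩, congrArg b (Fin.ext rfl)⟩
    · rintro ⟨r, rfl⟩
      exact ⟨Fin.castLE hc r, r.2, rfl⟩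
  have hind : LinearIndependent F (fun r : Fin c => b (Fin.castLE hc r)) :=
    b.linearIndependent.comp (Fin.castLE hc) (Fin.castLE_injective hc)
  rw [hset, finrank_span_eq_card hind]
  simp

private lemma agl_prefix_mono {mm : ℕ} (b : Basis (Fin mm) F V) {c c' : ℕ} (h : c ≤ c') :
    span F (⇑b '' {r : Fin mm | (r : ℕ) < c}) ≤ span F (⇑b '' {r : Fin mm | (r : ℕ) < c'}) :=
  span_mono (Set.image_mono (fun _ hr => lt_of_lt_of_le hr h))

/-- basis adapted to a complete flag -/
private lemma agl_flag_basis (mm : ℕ) (hm : finrank F V = mm) (Z : ℕ → Submodule F V)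
    (hmono : ∀ h, h < mm → Z h ≤ Z (h + 1))
    (hrank : ∀ h, h ≤ mm → finrank F ↥(Z h) = h) :
    ∃ b : Basis (Fin mm) F V, ∀ h, h ≤ mm → ∀ x ∈ Z h, ∀ i : Fin mm,
      h ≤ (i : ℕ) → b.repr x i = 0 := by
  have hlt : ∀ i : Fin mm, Z (i : ℕ) < Z ((i : ℕ) + 1) := by
    intro i
    apply lt_of_le_of_ne (hmono _ i.2)
    intro h
    have h1 := hrank (i : ℕ) (le_of_lt i.2)
    have h2 := hrank ((i : ℕ) + 1) i.2
    rw [h] at h1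
    omega
  choose bb hbb1 hbb2 using fun i : Fin mm => SetLike.exists_of_lt (hlt i)
  have key : ∀ h, h ≤ mm → Z h = span F (bb '' {i : Fin mm | (i : ℕ) < h}) := by
    intro h
    induction h with
    | zero =>
      intro _
      have hempty : {i : Fin mm | (i : ℕ) < 0} = ∅ := by ext i; simp
      rw [hempty, Set.image_empty, span_empty]
      exact Submodule.finrank_eq_zero.mp (hrank 0 (by omega))
    | succ h ihh =>
      intro hh
      have hhm : h < mm := hh
      have ihh' := ihh (by omega)
      have hfin : {i : Fin mm | (i : ℕ) < h + 1} =
          insert (⟨h, hhm⟩ : Fin mm) {i : Fin mm | (i : ℕ) < h} := by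
        ext i
        simp only [Set.mem_setOf_eq, Set.mem_insert_iff]
        constructor
        · intro hi
          rcases Nat.lt_or_ge (i : ℕ) h with h' | h'
          · exact Or.inr h'
          · exact Or.inl (Fin.ext (by simp only [Fin.val_mk]; omega))
        · rintro (rfl | hi)
          · simp only [Fin.val_mk]; omega
          · omega
      rw [hfin, Set.image_insert_eq, Submodule.span_insert]
      have hble : (F ∙ bb ⟨h, hhm⟩) ⊔ span F (bb '' {i : Fin mm | (i : ℕ) < h}) ≤ Z (h + 1) := by
        apply sup_le
        · rw [Submodule.span_singleton_le_iff_mem]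
          exact hbb1 ⟨h, hhm⟩
        · rw [← ihh']
          exact hmono h hhm
      have hnotmem : bb ⟨h, hhm⟩ ∉ span F (bb '' {i : Fin mm | (i : ℕ) < h}) := by
        rw [← ihh']; exact hbb2 ⟨h, hhm⟩
      have hstrict : span F (bb '' {i : Fin mm | (i : ℕ) < h}) <
          (F ∙ bb ⟨h, hhm⟩) ⊔ span F (bb '' {i : Fin mm | (i : ℕ) < h}) := by
        apply lt_of_le_of_ne le_sup_right
        intro hEq
        apply hnotmem
        rw [hEq]
        exact (le_sup_left : (F ∙ bb ⟨h, hhm⟩) ≤ _) (Submodule.mem_span_singleton_self _)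
      have h0 : finrank F ↥(span F (bb '' {i : Fin mm | (i : ℕ) < h})) = h := by
        rw [← ihh']; exact hrank h (by omega)
      have hlow := Submodule.finrank_lt_finrank_of_lt hstrict
      rw [h0] at hlow
      symm
      apply Submodule.eq_of_le_of_finrank_le hble
      rw [hrank (h + 1) hh]
      omega
  have htop : Z mm = ⊤ := Submodule.eq_top_of_finrank_eq (by rw [hrank mm le_rfl, hm])
  have hspan : ⊤ ≤ span F (Set.range bb) := by
    have huniv : {i : Fin mm | (i : ℕ) < mm} = Set.univ := by ext i; simp [i.2]
    rw [← Set.image_univ, ← huniv, ← key mm le_rfl, htop]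
  have hcard : Fintype.card (Fin mm) = finrank F V := by simp [hm]
  refine ⟨basisOfTopLeSpanOfCardEqFinrank bb hspan hcard, ?_⟩
  intro h hh x hx i hi
  rw [key h hh] at hx
  have hcoe : ⇑(basisOfTopLeSpanOfCardEqFinrank bb hspan hcard) = bb :=
    coe_basisOfTopLeSpanOfCardEqFinrank bb hspan hcard
  set B := basisOfTopLeSpanOfCardEqFinrank bb hspan hcard with hB
  rw [← hcoe] at hx
  induction hx using Submodule.span_induction with
  | mem y hy =>
    obtain ⟨r, hr, rfl⟩ := hy
    simp only [Set.mem_setOf_eq] at hr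
    rw [B.repr_self]
    refine Finsupp.single_eq_of_ne ?_
    rintro rfl
    omega
  | zero => simp
  | add y z _ _ hy hz => rw [map_add]; simp [Finsupp.add_apply, hy, hz]
  | smul c y _ hy => rw [_root_.map_smul]; simp [Finsupp.smul_apply, hy]

end AGLaux2

noncomputable section AGLKsec

variable (F : Type) [Field F] [Fintype F]

private def AGLKf (m : ℕ) : Type :=
  SplittingField ((X : F[X]) ^ (Fintype.card F) ^ m - X)

private instance (m : ℕ) : Field (AGLKf F m) :=
  inferInstanceAs (Field (SplittingField _))

private instance (m : ℕ) : Algebra F (AGLKf F m) :=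
  inferInstanceAs (Algebra F (SplittingField _))

private instance (m : ℕ) : FiniteDimensional F (AGLKf F m) :=
  inferInstanceAs (FiniteDimensional F (SplittingField _))

private instance (m : ℕ) : Finite (AGLKf F m) := Module.finite_of_finite F

private lemma AGLKf_pow_card (m : ℕ) (hm : m ≠ 0) (x : AGLKf F m) :
    x ^ (Fintype.card F) ^ m = x := by
  classical
  haveI : CharP F (ringChar F) := ringChar.charP F
  obtain ⟨d, hpprime, hqd⟩ := FiniteField.card F (ringChar F)
  haveI : Fact (ringChar F).Prime := ⟨hpprime⟩
  haveI : CharP (AGLKf F m) (ringChar F) :=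
    charP_of_injective_algebraMap (algebraMap F (AGLKf F m)).injective (ringChar F)
  obtain ⟨e, hqe⟩ : ∃ e, (Fintype.card F) ^ m = (ringChar F) ^ e :=
    ⟨(d : ℕ) * m, by rw [hqd, ← pow_mul]⟩
  let S : Subalgebra F (AGLKf F m) :=
  { carrier := {x : AGLKf F m | x ^ (Fintype.card F) ^ m = x}
    mul_mem' := by
      intro a b ha hb
      simp only [Set.mem_setOf_eq, mul_pow] at *
      rw [ha, hb]
    one_mem' := by simp
    add_mem' := by
      intro a b ha hb
      simp only [Set.mem_setOf_eq] at *
      rw [hqe, add_pow_char_pow, ← hqe, ha, hb]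
    zero_mem' := by
      simp only [Set.mem_setOf_eq]
      exact zero_pow (pow_ne_zero m (Fintype.card_ne_zero))
    algebraMap_mem' := by
      intro r
      simp only [Set.mem_setOf_eq, ← map_pow]
      rw [FiniteField.pow_card_pow] }
  have hsplit : IsSplittingField F (AGLKf F m) ((X : F[X]) ^ (Fintype.card F) ^ m - X) :=
    Polynomial.IsSplittingField.splittingField _
  have hg0 : ((X : F[X]) ^ (Fintype.card F) ^ m - X) ≠ 0 :=
    FiniteField.X_pow_card_pow_sub_X_ne_zero F hm Fintype.one_lt_card
  have hroot : (((X : F[X]) ^ (Fintype.card F) ^ m - X).rootSet (AGLKf F m)) ⊆ (S : Set _) := by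
    intro y hy
    rw [Polynomial.mem_rootSet_of_ne hg0] at hy
    simp only [map_sub, map_pow, aeval_X] at hy
    exact sub_eq_zero.mp hy
  have htop : Algebra.adjoin F (((X : F[X]) ^ (Fintype.card F) ^ m - X).rootSet (AGLKf F m)) = ⊤ :=
    hsplit.adjoin_rootSet
  have hle : (⊤ : Subalgebra F (AGLKf F m)) ≤ S := by
    rw [← htop]; exact Algebra.adjoin_le hroot
  exact hle (by trivial)

private lemma AGLKf_finrank (m : ℕ) (hm : m ≠ 0) :
    finrank F (AGLKf F m) = m := by
  classical
  haveI : Fintype (AGLKf F m) := Fintype.ofFinite _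
  haveI : CharP F (ringChar F) := ringChar.charP F
  obtain ⟨d, hpprime, hqd⟩ := FiniteField.card F (ringChar F)
  haveI : Fact (ringChar F).Prime := ⟨hpprime⟩
  have hpq : (ringChar F) ∣ (Fintype.card F) ^ m := by
    refine dvd_trans ?_ (dvd_pow_self (Fintype.card F) hm)
    rw [hqd]
    exact dvd_pow_self (ringChar F) d.2.ne'
  have hg0 : ((X : F[X]) ^ (Fintype.card F) ^ m - X) ≠ 0 :=
    FiniteField.X_pow_card_pow_sub_X_ne_zero F hm Fintype.one_lt_card
  have hsep : (((X : F[X]) ^ (Fintype.card F) ^ m - X)).Separable :=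
    galois_poly_separable (ringChar F) ((Fintype.card F) ^ m) hpq
  have hsplits : Splits (((X : F[X]) ^ (Fintype.card F) ^ m - X).map (algebraMap F (AGLKf F m))) :=
    SplittingField.splits _
  have hcardroot : Fintype.card (((X : F[X]) ^ (Fintype.card F) ^ m - X).rootSet (AGLKf F m)) =
      (((X : F[X]) ^ (Fintype.card F) ^ m - X)).natDegree :=
    card_rootSet_eq_natDegree hsep hsplits
  have hdeg : (((X : F[X]) ^ (Fintype.card F) ^ m - X)).natDegree = (Fintype.card F) ^ m :=
    FiniteField.X_pow_card_pow_sub_X_natDegree_eq F hm Fintype.one_lt_card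
  have huniv : (((X : F[X]) ^ (Fintype.card F) ^ m - X).rootSet (AGLKf F m)) = Set.univ := by
    rw [Set.eq_univ_iff_forall]
    intro y
    rw [Polynomial.mem_rootSet_of_ne hg0]
    simp only [map_sub, map_pow, aeval_X]
    rw [AGLKf_pow_card F m hm y, sub_self]
  have huniv' : Fintype.card (((X : F[X]) ^ (Fintype.card F) ^ m - X).rootSet (AGLKf F m)) =
      Fintype.card (AGLKf F m) :=
    Eq.trans (Fintype.card_congr (Equiv.setCongr huniv))
      (Fintype.card_congr (Equiv.Set.univ _))
  have hcardK : Fintype.card (AGLKf F m) = (Fintype.card F) ^ m := by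
    rw [← hdeg, ← hcardroot, huniv']
  have hpow : Fintype.card (AGLKf F m) = (Fintype.card F) ^ finrank F (AGLKf F m) :=
    card_eq_pow_finrank
  rw [hcardK] at hpow
  exact (Nat.pow_right_injective Fintype.one_lt_card hpow.symm)

end AGLKsec

noncomputable section TestMain

variable (F : Type) [Field F] [Fintype F]

private theorem agl_main (m n δ : ℕ) (γ : ℕ → ℕ)
    (hmn : n ≤ m) (hδ : 2 ≤ δ) (hδn : δ ≤ n)
    (hγpos : ∀ j < n, 1 ≤ γ j)
    (hγmono : ∀ j₁ j₂, j₁ ≤ j₂ → j₂ < n → γ j₁ ≤ γ j₂)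
    (hγtop : γ (n - 1) = m)
    (hcond : ∀ i < n - δ + 1,
      γ i ≤ γ (n - δ + 1) - (∑ j ∈ Finset.Ico (n - δ + 1) n, (m - γ j)) * (n - δ + 1 - i))
    (K : Type) [Field K] [Algebra F K] [FiniteDimensional F K] [Fintype K]
    (hfinrank : finrank F K = m) :
    ∃ C : Submodule F (Matrix (Fin m) (Fin n) F),
      IsFDRMC F m n γ (∑ i ∈ Finset.range (n - δ + 1), γ i) δ C := by
  classical
  set q := Fintype.card F with hqdef
  have hq2 : 1 < q := Fintype.one_lt_card
  set l := n - δ + 1 with hldef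
  have hl1 : 1 ≤ l := by omega
  have hln : l < n := by omega
  have hm1 : 1 ≤ m := by omega
  -- Frobenius facts
  haveI : CharP F (ringChar F) := ringChar.charP F
  obtain ⟨dd, hpprime, hqd⟩ := FiniteField.card F (ringChar F)
  haveI : Fact (ringChar F).Prime := ⟨hpprime⟩
  haveI : CharP K (ringChar F) :=
    charP_of_injective_algebraMap (algebraMap F K).injective _
  have hfrobadd : ∀ (i : ℕ) (x y : K), (x + y) ^ q ^ i = x ^ q ^ i + y ^ q ^ i := by
    intro i x y
    have hqi : q ^ i = (ringChar F) ^ ((dd : ℕ) * i) := by rw [hqdef, hqd, ← pow_mul]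
    rw [hqi, add_pow_char_pow]
  have hfrobsmul : ∀ (i : ℕ) (c : F) (x : K), (c • x) ^ q ^ i = c • x ^ q ^ i := by
    intro i c x
    rw [Algebra.smul_def, Algebra.smul_def, mul_pow, ← map_pow, FiniteField.pow_card_pow]
  -- the q-polynomial maps
  let falin : (Fin l → K) → (K →ₗ[F] K) := fun a =>
    { toFun := fun x => ∑ i : Fin l, a i * x ^ q ^ (i : ℕ)
      map_add' := by
        intro x y
        rw [← Finset.sum_add_distrib]
        exact Finset.sum_congr rfl fun i _ => by rw [hfrobadd, mul_add]
      map_smul' := by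
        intro c x
        simp only [RingHom.id_apply]
        rw [Finset.smul_sum]
        exact Finset.sum_congr rfl fun i _ => by
          rw [hfrobsmul, Algebra.mul_smul_comm] }
  have hfalin : ∀ (a : Fin l → K) (x : K), falin a x = ∑ i : Fin l, a i * x ^ q ^ (i : ℕ) :=
    fun a x => rfl
  -- kernel bound
  have kerb : ∀ a : Fin l → K, a ≠ 0 → finrank F (LinearMap.ker (falin a)) ≤ l - 1 := by
    intro a ha
    obtain ⟨i0, hi0⟩ : ∃ i, a i ≠ 0 := by
      by_contra h
      push_neg at h
      exact ha (funext h)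
    set P : K[X] := ∑ i : Fin l, Polynomial.C (a i) * Polynomial.X ^ (q ^ (i : ℕ)) with hP
    have hPcoeff : P.coeff (q ^ (i0 : ℕ)) = a i0 := by
      rw [hP, Polynomial.finset_sum_coeff]
      rw [Finset.sum_eq_single i0]
      · rw [Polynomial.coeff_C_mul, Polynomial.coeff_X_pow, if_pos rfl, mul_one]
      · intro i _ hne
        rw [Polynomial.coeff_C_mul, Polynomial.coeff_X_pow, if_neg, mul_zero]
        intro hEq
        exact hne (Fin.ext (Nat.pow_right_injective hq2 hEq.symm))
      · intro h
        exact absurd (Finset.mem_univ i0) h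
    have hP0 : P ≠ 0 := by
      intro h
      rw [h, Polynomial.coeff_zero] at hPcoeff
      exact hi0 hPcoeff.symm
    have hPdeg : P.natDegree ≤ q ^ (l - 1) := by
      rw [hP]
      refine Polynomial.natDegree_sum_le_of_forall_le _ _ (fun i _ => ?_)
      refine le_trans (Polynomial.natDegree_C_mul_le _ _) ?_
      rw [Polynomial.natDegree_X_pow]
      exact Nat.pow_le_pow_right (by omega) (by omega)
    have hroots : ∀ x : K, x ∈ LinearMap.ker (falin a) → x ∈ P.roots.toFinset := by
      intro x hx
      rw [LinearMap.mem_ker] at hx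
      rw [Multiset.mem_toFinset, Polynomial.mem_roots hP0]
      rw [Polynomial.IsRoot.def, hP, Polynomial.eval_finset_sum]
      rw [hfalin] at hx
      rw [← hx]
      exact Finset.sum_congr rfl fun i _ => by
        rw [Polynomial.eval_mul, Polynomial.eval_C, Polynomial.eval_pow, Polynomial.eval_X]
    have hcard1 : Fintype.card (LinearMap.ker (falin a)) ≤ q ^ (l - 1) := by
      have hinj : Function.Injective
          (fun x : LinearMap.ker (falin a) => (⟨x.1, hroots x.1 x.2⟩ : {y // y ∈ P.roots.toFinset})) := by
        intro x y hxy
        have h2 := Subtype.ext_iff.mp hxy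
        exact Subtype.ext h2
      calc Fintype.card (LinearMap.ker (falin a)) ≤ Fintype.card {y // y ∈ P.roots.toFinset} :=
            Fintype.card_le_of_injective _ hinj
        _ = P.roots.toFinset.card := Fintype.card_coe _
        _ ≤ Multiset.card P.roots := Multiset.toFinset_card_le _
        _ ≤ P.natDegree := Polynomial.card_roots' P
        _ ≤ q ^ (l - 1) := hPdeg
    have hcard2 : Fintype.card (LinearMap.ker (falin a)) =
        q ^ (finrank F (LinearMap.ker (falin a))) := card_eq_pow_finrank
    rw [hcard2] at hcard1
    exact (pow_le_pow_iff_right₀ hq2).mp hcard1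
  -- evaluation points
  let bK : Basis (Fin m) F K := (Module.finBasis F K).reindex (finCongr hfinrank)
  let g : Fin n → K := fun j => bK (Fin.castLE hmn j)
  have hgind : LinearIndependent F g :=
    bK.linearIndependent.comp (Fin.castLE hmn) (Fin.castLE_injective hmn)
  have hlen : l ≤ n := le_of_lt hln
  let gl : Fin l → K := fun t => g (Fin.castLE hlen t)
  have hglind : LinearIndependent F gl :=
    hgind.comp (Fin.castLE hlen) (Fin.castLE_injective hlen)
  have hspan_gl : finrank F (span F (Set.range gl)) = l := by
    rw [finrank_span_eq_card hglind]
    simp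
  -- the evaluation maps, K-linear in the coefficients
  let evalA : K → ((Fin l → K) →ₗ[K] K) := fun x =>
    { toFun := fun a => ∑ i : Fin l, a i * x ^ q ^ (i : ℕ)
      map_add' := by
        intro a b
        rw [← Finset.sum_add_distrib]
        exact Finset.sum_congr rfl fun i _ => by rw [Pi.add_apply, add_mul]
      map_smul' := by
        intro c a
        simp only [RingHom.id_apply, smul_eq_mul]
        rw [Finset.mul_sum]
        exact Finset.sum_congr rfl fun i _ => by
          rw [Pi.smul_apply, smul_eq_mul, mul_assoc] }
  have hevalA : ∀ (x : K) (a : Fin l → K), evalA x a = falin a x := fun x a => rfl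
  let Emap : (Fin l → K) →ₗ[K] (Fin l → K) := LinearMap.pi (fun t => evalA (gl t))
  have hEmapapp : ∀ (a : Fin l → K) (t : Fin l), Emap a t = falin a (gl t) := fun a t => rfl
  have hEker : ∀ a : Fin l → K, Emap a = 0 → a = 0 := by
    intro a ha
    by_contra h0
    have hsub : span F (Set.range gl) ≤ LinearMap.ker (falin a) := by
      rw [span_le]
      rintro _ ⟨t, rfl⟩
      rw [SetLike.mem_coe, LinearMap.mem_ker]
      have h1 : Emap a t = 0 := by rw [ha]; rfl
      rw [hEmapapp] at h1
      exact h1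
    have h1 := Submodule.finrank_mono hsub
    rw [hspan_gl] at h1
    have h2 := kerb a h0
    omega
  have hEinj : Function.Injective Emap := by
    rw [← LinearMap.ker_eq_bot]
    exact LinearMap.ker_eq_bot'.mpr hEker
  have hEbij : Function.Bijective Emap :=
    ⟨hEinj, LinearMap.injective_iff_surjective.mp hEinj⟩
  let Eequiv : (Fin l → K) ≃ₗ[K] (Fin l → K) := LinearEquiv.ofBijective Emap hEbij
  let μ : Fin n → Fin l → K := fun j t =>
    ((evalA (g j)).comp Eequiv.symm.toLinearMap) (Pi.single t 1)
  have hinterp : ∀ (a : Fin l → K) (j : Fin n),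
      falin a (g j) = ∑ t : Fin l, falin a (gl t) * μ j t := by
    intro a j
    have hEa : Eequiv.symm (Emap a) = a := by
      have : Emap a = Eequiv a := rfl
      rw [this, Eequiv.symm_apply_apply]
    have h1 : ((evalA (g j)).comp Eequiv.symm.toLinearMap) (Emap a) = falin a (g j) := by
      rw [LinearMap.comp_apply]
      have : Eequiv.symm.toLinearMap (Emap a) = a := hEa
      rw [this, hevalA]
    rw [← h1, LinearMap.pi_apply_eq_sum_univ ((evalA (g j)).comp Eequiv.symm.toLinearMap) (Emap a)]
    refine Finset.sum_congr rfl fun t _ => ?_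
    rw [smul_eq_mul, hEmapapp]
    have hsingle : (fun j' => if t = j' then (1 : K) else 0) = Pi.single t 1 := by
      funext s
      rw [Pi.single_apply]
      by_cases h : s = t
      · subst h; simp
      · rw [if_neg h, if_neg (Ne.symm h)]
    rw [hsingle]
  -- ===================== the subspace tower =====================
  have hγlem : ∀ j, j < n → γ j ≤ m := fun j hj => by
    rw [← hγtop]; exact hγmono j (n - 1) (by omega) (by omega)
  set ε := ∑ j ∈ Finset.Ico l n, (m - γ j) with hεdef
  have hcond' : ∀ t, t < l → γ t + ε * (l - t) ≤ γ l := by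
    intro t ht
    have h1 := hcond t (by omega)
    have h2 := hγpos t (by omega)
    obtain ⟨A, hA⟩ : ∃ A, ε * (l - t) = A := ⟨_, rfl⟩
    rw [hA] at h1 ⊢
    omega
  let Y' : ℕ → Submodule F K := fun j => span F (⇑bK '' {r : Fin m | (r : ℕ) < m - γ j})
  have hYrank : ∀ j, finrank F ↥(Y' j) = m - γ j := fun j => agl_prefix_finrank bK _ (by omega)
  have hYmono : ∀ j j', γ j ≤ γ j' → Y' j' ≤ Y' j := fun j j' h => agl_prefix_mono bK (by omega)
  let μ' : ℕ → ℕ → K := fun j t =>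
    if hj : j < n then (if ht : t < l then μ ⟨j, hj⟩ ⟨t, ht⟩ else 0) else 0
  let T : ℕ → Submodule F K := fun t =>
    (Finset.Ico l n).sup (fun j => Submodule.map (LinearMap.mulLeft F (μ' j t)) (Y' j))
  have hTrank : ∀ t, finrank F ↥(T t) ≤ ε := by
    intro t
    refine le_trans (agl_finrank_sup_le _ _ (fun j => m - γ j) ?_) le_rfl
    intro j hj
    exact le_trans (Submodule.finrank_map_le _ _) (le_of_eq (hYrank j))
  let Ct : ℕ → Submodule F K := fun t => ((Finset.Icc t (l - 1)).sup T) ⊔ Y' l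
  have hCtmono : ∀ i, i < l - 1 → Ct (i + 1) ≤ Ct i := by
    intro i hi
    exact sup_le_sup_right (Finset.sup_mono (Finset.Icc_subset_Icc_left (by omega))) _
  have hCtrank : ∀ i, i ≤ l - 1 → finrank F ↥(Ct i) ≤ m - γ i := by
    intro i hi
    show finrank F ↥(((Finset.Icc i (l - 1)).sup T) ⊔ Y' l) ≤ m - γ i
    have h1 : finrank F ↥((Finset.Icc i (l - 1)).sup T) ≤ ε * (l - i) := by
      refine le_trans (agl_finrank_sup_le _ _ (fun _ => ε) (fun t _ => hTrank t)) ?_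
      rw [Finset.sum_const, Nat.card_Icc, smul_eq_mul]
      have hsimp : l - 1 + 1 - i = l - i := by omega
      rw [hsimp, mul_comm]
    have h2 := Submodule.finrank_add_le_finrank_add_finrank ((Finset.Icc i (l - 1)).sup T) (Y' l)
    have h3 := hYrank l
    have h4 := hcond' i (by omega)
    have h5 := hγlem l (by omega)
    obtain ⟨A, hA⟩ : ∃ A, ε * (l - i) = A := ⟨_, rfl⟩
    rw [hA] at h1 h4
    omega
  obtain ⟨U, hUmono, hUC, hUrank⟩ := agl_chain (l - 1) Ct (fun t => m - γ t) hCtmono hCtrank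
    (fun i hi => by
      have hmono2 := hγmono i (i + 1) (by omega) (by omega)
      show m - γ (i + 1) ≤ m - γ i
      omega)
    (by show m - γ 0 ≤ finrank F K
        rw [hfinrank]; omega)
  -- ===================== the bilinear form =====================
  have hm0 : 0 < m := by omega
  let L : K →ₗ[F] F := bK.coord ⟨0, hm0⟩
  let Bf : LinearMap.BilinForm F K := (LinearMap.mul F K).compr₂ L
  have hBfapp : ∀ x y : K, Bf x y = L (x * y) := fun x y => rfl
  have hBsymm : ∀ x y : K, Bf x y = Bf y x := fun x y => by rw [hBfapp, hBfapp, mul_comm]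
  have hBrefl : Bf.IsRefl := fun x y h => by rw [hBsymm]; exact h
  have hBnondeg : Bf.Nondegenerate := by
    refine (LinearMap.IsRefl.nondegenerate_iff_separatingLeft (B := Bf) hBrefl).2 ?_
    intro x hx
    by_contra hx0
    have h1 := hx (x⁻¹ * bK ⟨0, hm0⟩)
    rw [hBfapp, ← mul_assoc, mul_inv_cancel₀ hx0, one_mul] at h1
    have h2 : L (bK ⟨0, hm0⟩) = 1 := by
      show bK.coord ⟨0, hm0⟩ (bK ⟨0, hm0⟩) = 1
      rw [Basis.coord_apply, Basis.repr_self, Finsupp.single_eq_same]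
    rw [h2] at h1
    exact one_ne_zero h1
  let V' : ℕ → Submodule F K := fun t => Bf.orthogonal (U t)
  have hVrank : ∀ t, t ≤ l - 1 → finrank F ↥(V' t) = γ t := by
    intro t ht
    have ho := LinearMap.BilinForm.finrank_orthogonal hBnondeg (U t)
    rw [hUrank t ht, hfinrank] at ho
    have h5 := hγlem t (by omega)
    rw [ho]
    omega
  -- ===================== the column space chain =====================
  let A' : ℕ → Submodule F K := fun j => if j < l then V' j else Bf.orthogonal (Y' j)
  have hArank : ∀ j, j < n → finrank F ↥(A' j) = γ j := by
    intro j hj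
    show finrank F ↥(if j < l then V' j else Bf.orthogonal (Y' j)) = γ j
    by_cases h : j < l
    · rw [if_pos h]
      exact hVrank j (by omega)
    · rw [if_neg h]
      have ho := LinearMap.BilinForm.finrank_orthogonal hBnondeg (Y' j)
      rw [hYrank j, hfinrank] at ho
      rw [ho]
      have := hγlem j hj
      omega
  have hUanti := agl_antitone hUmono
  have hVmono : ∀ t t', t ≤ t' → t' ≤ l - 1 → V' t ≤ V' t' :=
    fun t t' h h' => LinearMap.BilinForm.orthogonal_le (hUanti t t' h h')
  have hYCt : Y' l ≤ Ct (l - 1) := le_sup_right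
  have hYinU : Y' l ≤ U (l - 1) := le_trans hYCt (hUC (l - 1) le_rfl)
  have hAmono : ∀ j j', j ≤ j' → j' < n → A' j ≤ A' j' := by
    intro j j' hjj hj'
    show (if j < l then V' j else Bf.orthogonal (Y' j)) ≤
      (if j' < l then V' j' else Bf.orthogonal (Y' j'))
    by_cases h : j' < l
    · have hj : j < l := by omega
      rw [if_pos h, if_pos hj]
      exact hVmono j j' hjj (by omega)
    · by_cases h2 : j < l
      · rw [if_pos h2, if_neg h]
        refine le_trans (hVmono j (l - 1) (by omega) le_rfl) ?_
        refine le_trans (LinearMap.BilinForm.orthogonal_le hYinU) ?_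
        exact LinearMap.BilinForm.orthogonal_le
          (hYmono l j' (hγmono l j' (by omega) hj'))
      · rw [if_neg h2, if_neg h]
        exact LinearMap.BilinForm.orthogonal_le (hYmono j j' (hγmono j j' hjj hj'))
  -- ===================== the complete flag =====================
  let Cfl : ℕ → Submodule F K := fun h => ((Finset.range n).filter (fun j => γ j ≤ h)).sup A'
  have hCflmono : ∀ h h', h ≤ h' → Cfl h ≤ Cfl h' := fun h h' hh =>
    Finset.sup_mono (Finset.monotone_filter_right _ (fun j _ hj => le_trans hj hh))
  have hCflrank : ∀ h, finrank F ↥(Cfl h) ≤ h := by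
    intro h
    show finrank F ↥(((Finset.range n).filter (fun j => γ j ≤ h)).sup A') ≤ h
    by_cases hne : ((Finset.range n).filter (fun j => γ j ≤ h)).Nonempty
    · have hjmem := Finset.max'_mem _ hne
      have hjn : ((Finset.range n).filter (fun j => γ j ≤ h)).max' hne < n :=
        Finset.mem_range.mp (Finset.mem_filter.mp hjmem).1
      have hle : ((Finset.range n).filter (fun j => γ j ≤ h)).sup A' ≤
          A' (((Finset.range n).filter (fun j => γ j ≤ h)).max' hne) :=
        Finset.sup_le (fun j hj => hAmono j _ (Finset.le_max' _ j hj) hjn)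
      have h1 := Submodule.finrank_mono hle
      rw [hArank _ hjn] at h1
      exact le_trans h1 (Finset.mem_filter.mp hjmem).2
    · rw [Finset.not_nonempty_iff_eq_empty] at hne
      rw [hne, Finset.sup_empty]
      simp
  obtain ⟨Uz, hUzmono, hUzC, hUzrank⟩ := agl_chain m (fun i => Cfl (m - i)) (fun i => m - i)
    (fun i hi => hCflmono _ _ (by omega))
    (fun i hi => by
      show finrank F ↥(Cfl (m - i)) ≤ m - i
      exact hCflrank (m - i))
    (fun i hi => by
      show m - (i + 1) ≤ m - i
      omega)
    (by show m - 0 ≤ finrank F K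
        rw [hfinrank]; omega)
  let Z : ℕ → Submodule F K := fun h => Uz (m - h)
  have hZrank : ∀ h, h ≤ m → finrank F ↥(Z h) = h := by
    intro h hh
    show finrank F ↥(Uz (m - h)) = h
    rw [hUzrank (m - h) (by omega)]
    omega
  have hZmono : ∀ h, h < m → Z h ≤ Z (h + 1) :=
    fun h hh => agl_antitone hUzmono (m - (h + 1)) (m - h) (by omega) (by omega)
  have hAZ : ∀ j, j < n → A' j ≤ Z (γ j) := by
    intro j hj
    refine le_trans ?_ (hUzC (m - γ j) (by omega))
    show A' j ≤ Cfl (m - (m - γ j))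
    have hjm : m - (m - γ j) = γ j := by have := hγlem j hj; omega
    rw [hjm]
    exact Finset.le_sup (Finset.mem_filter.mpr ⟨Finset.mem_range.mpr hj, le_rfl⟩)
  obtain ⟨bZ, hbZ⟩ := agl_flag_basis m hfinrank Z hZmono hZrank
  -- ===================== the code P =====================
  let Vfam : Fin l → Submodule F K := fun t => V' (t : ℕ)
  let Er : (Fin l → K) ≃ₗ[F] (Fin l → K) := Eequiv.restrictScalars F
  let P : Submodule F (Fin l → K) :=
    Submodule.comap (Er : (Fin l → K) →ₗ[F] (Fin l → K)) (Submodule.pi Set.univ Vfam)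
  have hPmem : ∀ a : Fin l → K, a ∈ P ↔ ∀ t : Fin l, falin a (gl t) ∈ V' (t : ℕ) := by
    intro a
    rw [Submodule.mem_comap]
    have hEra : (Er : (Fin l → K) →ₗ[F] (Fin l → K)) a = Emap a := rfl
    rw [hEra]
    rw [Submodule.mem_pi]
    constructor
    · intro h t
      have := h t (Set.mem_univ t)
      rwa [hEmapapp] at this
    · intro h t _
      rw [hEmapapp]
      exact h t
  have hPrank : finrank F ↥P = ∑ t : Fin l, γ (t : ℕ) := by
    have h1 : P = Submodule.map (Er.symm : (Fin l → K) →ₗ[F] (Fin l → K))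
        (Submodule.pi Set.univ Vfam) := Submodule.comap_equiv_eq_map_symm _ _
    rw [h1, LinearEquiv.finrank_map_eq, agl_finrank_pi]
    exact Finset.sum_congr rfl fun t _ => hVrank (t : ℕ) (by omega)
  -- ===================== the matrix code =====================
  let Φ : (Fin l → K) →ₗ[F] Matrix (Fin m) (Fin n) F :=
    { toFun := fun a => Matrix.of (fun i j => bZ.repr (falin a (g j)) i)
      map_add' := by
        intro a b
        ext i j
        simp only [Matrix.of_apply, Matrix.add_apply]
        have hab : falin (a + b) (g j) = falin a (g j) + falin b (g j) := by
          rw [hfalin, hfalin, hfalin, ← Finset.sum_add_distrib]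
          exact Finset.sum_congr rfl fun i' _ => by rw [Pi.add_apply, add_mul]
        rw [hab, map_add, Finsupp.add_apply]
      map_smul' := by
        intro c a
        ext i j
        simp only [Matrix.of_apply, Matrix.smul_apply, RingHom.id_apply]
        have hca : falin (c • a) (g j) = c • falin a (g j) := by
          rw [hfalin, hfalin, Finset.smul_sum]
          exact Finset.sum_congr rfl fun i' _ => by
            rw [Pi.smul_apply, smul_mul_assoc]
        rw [hca, _root_.map_smul, Finsupp.smul_apply, smul_eq_mul] }
  have hΦapp : ∀ (a : Fin l → K) (i : Fin m) (j : Fin n),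
      Φ a i j = bZ.repr (falin a (g j)) i := fun a i j => rfl
  have hgkernel : ∀ a : Fin l → K, (∀ j : Fin n, falin a (g j) = 0) → a = 0 := by
    intro a hz
    by_contra h0
    have hsub : span F (Set.range g) ≤ LinearMap.ker (falin a) := by
      rw [span_le]
      rintro _ ⟨j, rfl⟩
      exact hz j
    have h1 := Submodule.finrank_mono hsub
    rw [finrank_span_eq_card hgind, Fintype.card_fin] at h1
    have h2 := kerb a h0
    omega
  have hΦinj : Function.Injective Φ := by
    rw [← LinearMap.ker_eq_bot]
    apply LinearMap.ker_eq_bot'.mpr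
    intro a ha
    apply hgkernel
    intro j
    have hco : ∀ i : Fin m, bZ.repr (falin a (g j)) i = 0 := by
      intro i
      have h1 : Φ a i j = (0 : Matrix (Fin m) (Fin n) F) i j := by rw [ha]
      rw [hΦapp] at h1
      simpa using h1
    have hrepr : bZ.repr (falin a (g j)) = 0 := Finsupp.ext hco
    exact (EmbeddingLike.map_eq_zero_iff).mp hrepr
  -- ===================== support =====================
  have hsupport : ∀ a ∈ P, ∀ j : Fin n, falin a (g j) ∈ Z (γ (j : ℕ)) := by
    intro a ha j
    refine hAZ (j : ℕ) j.2 ?_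
    show falin a (g j) ∈ (if (j : ℕ) < l then V' (j : ℕ) else Bf.orthogonal (Y' (j : ℕ)))
    by_cases h : (j : ℕ) < l
    · rw [if_pos h]
      have h1 := (hPmem a).mp ha ⟨(j : ℕ), h⟩
      have hgl : gl ⟨(j : ℕ), h⟩ = g j := congrArg g (Fin.ext rfl)
      rwa [hgl] at h1
    · rw [if_neg h]
      rw [LinearMap.BilinForm.mem_orthogonal_iff]
      intro y hy
      rw [hinterp a j, map_sum]
      refine Finset.sum_eq_zero fun t _ => ?_
      have hμeq : μ' (j : ℕ) (t : ℕ) = μ j t := by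
        show (if hj : (j : ℕ) < n then
            (if ht : (t : ℕ) < l then μ ⟨(j : ℕ), hj⟩ ⟨(t : ℕ), ht⟩ else 0) else 0) = μ j t
        rw [dif_pos j.2, dif_pos t.2]
      have hsw : Bf y (falin a (gl t) * μ j t) =
          Bf (μ' (j : ℕ) (t : ℕ) * y) (falin a (gl t)) := by
        rw [hBfapp, hBfapp, hμeq]
        congr 1
        ring
      rw [hsw]
      have hyU : μ' (j : ℕ) (t : ℕ) * y ∈ U (t : ℕ) := by
        have hjl : l ≤ (j : ℕ) := by omega
        have h1 : μ' (j : ℕ) (t : ℕ) * y ∈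
            Submodule.map (LinearMap.mulLeft F (μ' (j : ℕ) (t : ℕ))) (Y' (j : ℕ)) :=
          ⟨y, hy, rfl⟩
        have h2 : Submodule.map (LinearMap.mulLeft F (μ' (j : ℕ) (t : ℕ))) (Y' (j : ℕ)) ≤
            T (t : ℕ) :=
          Finset.le_sup (f := fun j' => Submodule.map (LinearMap.mulLeft F (μ' j' (t : ℕ))) (Y' j'))
            (Finset.mem_Ico.mpr ⟨hjl, j.2⟩)
        have h3 : T (t : ℕ) ≤ Ct (t : ℕ) :=
          le_trans (Finset.le_sup (Finset.mem_Icc.mpr ⟨le_rfl, by omega⟩)) le_sup_left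
        exact (le_trans (le_trans h2 h3) (hUC (t : ℕ) (by omega))) h1
      have hv := (hPmem a).mp ha t
      rw [LinearMap.BilinForm.mem_orthogonal_iff] at hv
      exact hv _ hyU
  -- ===================== rank =====================
  have hrankb : ∀ a : Fin l → K, a ≠ 0 → δ ≤ (Φ a).rank := by
    intro a ha
    rw [Matrix.rank_eq_finrank_span_cols]
    have hfun : (Φ a)ᵀ =
        (⇑(bZ.equivFun.toLinearMap) ∘ fun j : Fin n => falin a (g j)) := by
      funext j i
      show (Φ a) i j = bZ.equivFun (falin a (g j)) i
      rw [hΦapp, Basis.equivFun_apply]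
    have hcols : Set.range (Φ a)ᵀ =
        ⇑(bZ.equivFun.toLinearMap) '' Set.range (fun j : Fin n => falin a (g j)) := by
      rw [hfun, Set.range_comp]
    change δ ≤ finrank F ↥(span F (Set.range (Φ a)ᵀ))
    rw [hcols, Submodule.span_image, LinearEquiv.finrank_map_eq]
    have h2 : Set.range (fun j : Fin n => falin a (g j)) = ⇑(falin a) '' Set.range g := by
      rw [← Set.range_comp]
      rfl
    rw [h2, Submodule.span_image]
    have hGrank : finrank F ↥(span F (Set.range g)) = n := by
      rw [finrank_span_eq_card hgind, Fintype.card_fin]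
    have hrn := LinearMap.finrank_range_add_finrank_ker
      ((falin a).comp (span F (Set.range g)).subtype)
    have hrange : LinearMap.range ((falin a).comp (span F (Set.range g)).subtype) =
        Submodule.map (falin a) (span F (Set.range g)) := by
      rw [LinearMap.range_comp, Submodule.range_subtype]
    have hker : finrank F ↥(LinearMap.ker ((falin a).comp (span F (Set.range g)).subtype)) ≤
        l - 1 := by
      rw [LinearMap.ker_comp]
      have he : finrank F ↥(Submodule.comap (span F (Set.range g)).subtype
          (LinearMap.ker (falin a))) =
          finrank F ↥(Submodule.map (span F (Set.range g)).subtype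
            (Submodule.comap (span F (Set.range g)).subtype (LinearMap.ker (falin a)))) :=
        (Submodule.finrank_map_subtype_eq _ _).symm
      rw [he]
      refine le_trans (Submodule.finrank_mono (Submodule.map_comap_le _ _)) ?_
      exact kerb a ha
    rw [hrange, hGrank] at hrn
    omega
  -- ===================== conclusion =====================
  refine ⟨Submodule.map Φ P, ?_, ?_, ?_⟩
  · have he := LinearEquiv.finrank_eq (Submodule.equivMapOfInjective Φ hΦinj P)
    rw [← he, hPrank]
    rw [← Fin.sum_univ_eq_sum_range]
  · rintro A ⟨a, haP, rfl⟩ i j hij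
    have hmem := hsupport a haP j
    have h1 := hbZ (γ (j : ℕ)) (hγlem _ j.2) _ hmem i hij
    rw [hΦapp]
    exact h1
  · rintro A ⟨a, haP, rfl⟩ hA0
    have ha : a ≠ 0 := fun h => hA0 (by rw [h, map_zero])
    exact hrankb a ha

end TestMain


/-- **Antrobus–Gluesing-Luerssen construction.**
Let `F` be an `m × n` Ferrers diagram with column heights `γ_1 ≤ ⋯ ≤ γ_n = m`
(here 0-indexed), `m ≥ n`, `2 ≤ δ ≤ n`. Set `l = n - δ + 1` and let
`ε = Σ_{j=l+1}^{n} (m - γ_j)` be the number of dots missing from the rightmost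
`δ - 1` columns. If `γ_i ≤ γ_{l+1} - ε (l + 1 - i)` for all `1 ≤ i ≤ l`
(0-indexed: `γ i ≤ γ l - ε (l - i)` for all `i < l`), then for every prime
power `q` there exists an `[F, Σ_{i=1}^{l} γ_i, δ]_q` Ferrers diagram
rank metric code. -/
theorem fdrmc_construction_antrobus_gluesingluerssen
    (F : Type) [Field F] [Fintype F] (m n δ : ℕ) (γ : ℕ → ℕ)
    (hmn : n ≤ m) (hδ : 2 ≤ δ) (hδn : δ ≤ n)
    (hγpos : ∀ j < n, 1 ≤ γ j)
    (hγmono : ∀ j₁ j₂, j₁ ≤ j₂ → j₂ < n → γ j₁ ≤ γ j₂)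
    (hγtop : γ (n - 1) = m)
    (hcond : ∀ i < n - δ + 1,
      γ i ≤ γ (n - δ + 1) - (∑ j ∈ Finset.Ico (n - δ + 1) n, (m - γ j)) * (n - δ + 1 - i)) :
    ∃ C : Submodule F (Matrix (Fin m) (Fin n) F),
      IsFDRMC F m n γ (∑ i ∈ Finset.range (n - δ + 1), γ i) δ C := by
  have hm0 : m ≠ 0 := by omega
  haveI : Fintype (AGLKf F m) := Fintype.ofFinite _
  exact agl_main F m n δ γ hmn hδ hδn hγpos hγmono hγtop hcond (AGLKf F m)
    (AGLKf_finrank F m hm0)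
end

section
/- Let F_1 be an m_1×n_1 Ferrers diagram with column heights γ^{(1)}_1 ≤ ⋯ ≤ γ^{(1)}_{n_1} = m_1, let F_2 be an m_2×n_2 Ferrers diagram with column heights γ^{(2)}_1 ≤ ⋯ ≤ γ^{(2)}_{n_2} = m_2, and let m_3 ≥ m_1 and n_3 ≥ n_2 be integers. Let F be the (m_2+m_3)×(n_1+n_3) Ferrers diagram whose column heights are γ^{(1)}_j for 1 ≤ j ≤ n_1, m_3 for n_1 < j ≤ n_1+n_3−n_2, and m_3 + γ^{(2)}_{j−(n_1+n_3−n_2)} for n_1+n_3−n_2 < j ≤ n_1+n_3 (so F consists of F_1 in the top-left, a full m_3×n_3 rectangle of dots in the top-right, and F_2 in the bottom-right). If for a prime power q there exist an [F_1, k, δ_1]_q FDRMC and an [F_2, k, δ_2]_q FDRMC, then there exists an [F, k, δ_1+δ_2]_q FDRMC. -/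
open Matrix Module

lemma aux_rank_submatrix_le {F : Type*} [Field F] {m n m' n' : Type*}
    [Fintype m] [Fintype n] [Fintype m'] [Fintype n'] [DecidableEq m] [DecidableEq n]
    (f : m' → m) (g : n' → n) (A : Matrix m n F) :
    (A.submatrix f g).rank ≤ A.rank := by
  have h : A.submatrix f g =
      ((1 : Matrix m m F).submatrix f id) * A * ((1 : Matrix n n F).submatrix id g) := by
    ext i j
    simp [Matrix.mul_apply, Matrix.one_apply, Finset.sum_ite_eq, Finset.sum_ite_eq',
      ite_mul, mul_ite]
  rw [h]
  exact le_trans (Matrix.rank_mul_le_left _ _) (Matrix.rank_mul_le_right _ _)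

lemma aux_range_prodMap {R M N M₂ N₂ : Type*} [CommRing R]
    [AddCommGroup M] [AddCommGroup N] [AddCommGroup M₂] [AddCommGroup N₂]
    [Module R M] [Module R N] [Module R M₂] [Module R N₂]
    (f : M →ₗ[R] M₂) (g : N →ₗ[R] N₂) :
    LinearMap.range (f.prodMap g) = (LinearMap.range f).prod (LinearMap.range g) := by
  ext ⟨a, b⟩
  constructor
  · rintro ⟨⟨x, y⟩, h⟩
    rw [LinearMap.prodMap_apply] at h
    exact ⟨⟨x, congrArg Prod.fst h⟩, ⟨y, congrArg Prod.snd h⟩⟩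
  · rintro ⟨⟨x, hx⟩, ⟨y, hy⟩⟩
    exact ⟨(x, y), by simp [LinearMap.prodMap_apply, hx, hy]⟩

lemma aux_finrank_prod {F M N : Type*} [Field F] [AddCommGroup M] [AddCommGroup N]
    [Module F M] [Module F N] [FiniteDimensional F M] [FiniteDimensional F N]
    (p : Submodule F M) (q : Submodule F N) :
    Module.finrank F (p.prod q) = Module.finrank F p + Module.finrank F q := by
  rw [← Module.finrank_prod]
  exact LinearEquiv.finrank_eq
    { toFun := fun x => (⟨x.1.1, x.2.1⟩, ⟨x.1.2, x.2.2⟩)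
      map_add' := fun x y => rfl
      map_smul' := fun c x => rfl
      invFun := fun x => ⟨(x.1.1, x.2.1), ⟨x.1.2, x.2.2⟩⟩
      left_inv := fun x => rfl
      right_inv := fun x => rfl }

lemma aux_rank_fromBlocks {F : Type*} [Field F] {m n p q : Type*}
    [Fintype m] [Fintype n] [Fintype p] [Fintype q]
    (A : Matrix m n F) (D : Matrix p q F) :
    A.rank + D.rank ≤ (Matrix.fromBlocks A 0 0 D).rank := by
  have hM : (Matrix.fromBlocks A 0 0 D).mulVecLin =
      ((LinearEquiv.sumArrowLequivProdArrow m p F F).symm.toLinearMap) ∘ₗ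
      ((A.mulVecLin.prodMap D.mulVecLin) ∘ₗ
        (LinearEquiv.sumArrowLequivProdArrow n q F F).toLinearMap) := by
    apply LinearMap.ext; intro v
    have hv : v = Sum.elim (v ∘ Sum.inl) (v ∘ Sum.inr) := (Sum.elim_comp_inl_inr v).symm
    simp only [Matrix.mulVecLin_apply, LinearMap.comp_apply, LinearEquiv.coe_coe,
      LinearMap.prodMap_apply]
    conv_lhs => rw [hv]
    rw [Matrix.fromBlocks_mulVec]
    funext x
    cases x with
    | inl i =>
        simp [LinearEquiv.sumArrowLequivProdArrow, Equiv.sumArrowEquivProdArrow,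
          Matrix.zero_mulVec]
    | inr i =>
        simp [LinearEquiv.sumArrowLequivProdArrow, Equiv.sumArrowEquivProdArrow,
          Matrix.zero_mulVec]
  have key : (Matrix.fromBlocks A 0 0 D).rank = A.rank + D.rank := by
    rw [Matrix.rank, hM, LinearMap.range_comp, LinearMap.range_comp,
      LinearEquiv.range, Submodule.map_top, LinearEquiv.finrank_map_eq,
      aux_range_prodMap, aux_finrank_prod]
    rfl
  exact key.ge

/-- Embed an `m₁ × n₁` matrix (top-left) and an `m₂ × n₂` matrix (bottom-right)
into an `(m₂ + m₃) × (n₁ + n₃)` matrix. -/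
def auxEmbed {F : Type*} [Field F] (m₁ n₁ m₂ n₂ m₃ n₃ : ℕ)
    (A : Matrix (Fin m₁) (Fin n₁) F) (B : Matrix (Fin m₂) (Fin n₂) F) :
    Matrix (Fin (m₂ + m₃)) (Fin (n₁ + n₃)) F := fun i j =>
  if h : (i : ℕ) < m₁ ∧ (j : ℕ) < n₁ then A ⟨i, h.1⟩ ⟨j, h.2⟩
  else if h' : m₃ ≤ (i : ℕ) ∧ n₁ + n₃ - n₂ ≤ (j : ℕ) ∧ (i : ℕ) - m₃ < m₂ ∧
      (j : ℕ) - (n₁ + n₃ - n₂) < n₂ then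
    B ⟨(i : ℕ) - m₃, h'.2.2.1⟩ ⟨(j : ℕ) - (n₁ + n₃ - n₂), h'.2.2.2⟩
  else 0

lemma auxEmbed_add {F : Type*} [Field F] (m₁ n₁ m₂ n₂ m₃ n₃ : ℕ)
    (A A' : Matrix (Fin m₁) (Fin n₁) F) (B B' : Matrix (Fin m₂) (Fin n₂) F) :
    auxEmbed m₁ n₁ m₂ n₂ m₃ n₃ (A + A') (B + B') =
      auxEmbed m₁ n₁ m₂ n₂ m₃ n₃ A B + auxEmbed m₁ n₁ m₂ n₂ m₃ n₃ A' B' := by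
  funext i j
  simp only [auxEmbed, Matrix.add_apply]
  split_ifs <;> simp

lemma auxEmbed_smul {F : Type*} [Field F] (m₁ n₁ m₂ n₂ m₃ n₃ : ℕ) (c : F)
    (A : Matrix (Fin m₁) (Fin n₁) F) (B : Matrix (Fin m₂) (Fin n₂) F) :
    auxEmbed m₁ n₁ m₂ n₂ m₃ n₃ (c • A) (c • B) =
      c • auxEmbed m₁ n₁ m₂ n₂ m₃ n₃ A B := by
  funext i j
  simp only [auxEmbed, Matrix.smul_apply]
  split_ifs <;> simp

lemma auxEmbed_submatrix {F : Type*} [Field F] (m₁ n₁ m₂ n₂ m₃ n₃ : ℕ)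
    (hm : m₁ ≤ m₃) (hn : n₂ ≤ n₃)
    (A : Matrix (Fin m₁) (Fin n₁) F) (B : Matrix (Fin m₂) (Fin n₂) F) :
    (auxEmbed m₁ n₁ m₂ n₂ m₃ n₃ A B).submatrix
      (Sum.elim (fun i : Fin m₁ => (⟨(i : ℕ), by omega⟩ : Fin (m₂ + m₃)))
        (fun i : Fin m₂ => ⟨m₃ + (i : ℕ), by omega⟩))
      (Sum.elim (fun j : Fin n₁ => (⟨(j : ℕ), by omega⟩ : Fin (n₁ + n₃)))
        (fun j : Fin n₂ => ⟨n₁ + n₃ - n₂ + (j : ℕ), by omega⟩)) =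
      Matrix.fromBlocks A 0 0 B := by
  ext i j
  cases i with
  | inl i =>
    have hi := i.isLt
    cases j with
    | inl j =>
      have hj := j.isLt
      dsimp only [Matrix.submatrix_apply, Sum.elim_inl, Matrix.fromBlocks_apply₁₁, auxEmbed]
      split_ifs with h h' <;> first | rfl | omega
    | inr j =>
      have hj := j.isLt
      dsimp only [Matrix.submatrix_apply, Sum.elim_inl, Sum.elim_inr,
        Matrix.fromBlocks_apply₁₂, auxEmbed, Matrix.zero_apply]
      split_ifs with h h' <;> first | rfl | omega
  | inr i =>
    have hi := i.isLt
    cases j with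
    | inl j =>
      have hj := j.isLt
      dsimp only [Matrix.submatrix_apply, Sum.elim_inl, Sum.elim_inr,
        Matrix.fromBlocks_apply₂₁, auxEmbed, Matrix.zero_apply]
      split_ifs with h h' <;> first | rfl | omega
    | inr j =>
      have hj := j.isLt
      dsimp only [Matrix.submatrix_apply, Sum.elim_inr, Matrix.fromBlocks_apply₂₂, auxEmbed]
      split_ifs with h h'
      · omega
      · congr 1 <;> exact Fin.ext (by simp)
      · omega



/-- **Combining Ferrers diagram rank metric codes** (Etzion–Gorla–Ravagnani–
Wachter-Zeh). Let `F₁` be an `m₁ × n₁` Ferrers diagram, `F₂` an `m₂ × n₂`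
Ferrers diagram, `m₃ ≥ m₁`, `n₃ ≥ n₂`, and let `F` be the
`(m₂ + m₃) × (n₁ + n₃)` Ferrers diagram consisting of `F₁` in the top-left,
a full `m₃ × n₃` rectangle of dots in the top-right, and `F₂` in the
bottom-right: its column heights are `γ₁ j` for `j < n₁`, `m₃` for
`n₁ ≤ j < n₁ + n₃ - n₂`, and `m₃ + γ₂ (j - (n₁ + n₃ - n₂))` for
`n₁ + n₃ - n₂ ≤ j < n₁ + n₃` (0-indexed). If there exist an `[F₁, k, δ₁]_q`
FDRMC and an `[F₂, k, δ₂]_q` FDRMC, then there exists an `[F, k, δ₁ + δ₂]_q`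
FDRMC. -/
theorem fdrmc_combination
    (F : Type) [Field F] [Fintype F]
    (m₁ n₁ m₂ n₂ m₃ n₃ k δ₁ δ₂ : ℕ) (γ₁ γ₂ : ℕ → ℕ)
    (hn₁ : 0 < n₁) (hn₂ : 0 < n₂)
    (hγ₁pos : ∀ j < n₁, 1 ≤ γ₁ j)
    (hγ₁mono : ∀ j₁ j₂, j₁ ≤ j₂ → j₂ < n₁ → γ₁ j₁ ≤ γ₁ j₂)
    (hγ₁top : γ₁ (n₁ - 1) = m₁)
    (hγ₂pos : ∀ j < n₂, 1 ≤ γ₂ j)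
    (hγ₂mono : ∀ j₁ j₂, j₁ ≤ j₂ → j₂ < n₂ → γ₂ j₁ ≤ γ₂ j₂)
    (hγ₂top : γ₂ (n₂ - 1) = m₂)
    (hm₃ : m₁ ≤ m₃) (hn₃ : n₂ ≤ n₃)
    (C₁ : Submodule F (Matrix (Fin m₁) (Fin n₁) F))
    (C₂ : Submodule F (Matrix (Fin m₂) (Fin n₂) F))
    (hC₁ : IsFDRMC F m₁ n₁ γ₁ k δ₁ C₁)
    (hC₂ : IsFDRMC F m₂ n₂ γ₂ k δ₂ C₂) :
    ∃ C : Submodule F (Matrix (Fin (m₂ + m₃)) (Fin (n₁ + n₃)) F),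
      IsFDRMC F (m₂ + m₃) (n₁ + n₃)
        (fun j => if j < n₁ then γ₁ j
          else if j < n₁ + n₃ - n₂ then m₃
          else m₃ + γ₂ (j - (n₁ + n₃ - n₂)))
        k (δ₁ + δ₂) C := by
  classical
  let e : C₁ ≃ₗ[F] C₂ := LinearEquiv.ofFinrankEq _ _ (by rw [hC₁.1, hC₂.1])
  let Φ : C₁ →ₗ[F] Matrix (Fin (m₂ + m₃)) (Fin (n₁ + n₃)) F :=
    { toFun := fun A => auxEmbed m₁ n₁ m₂ n₂ m₃ n₃ (A : Matrix (Fin m₁) (Fin n₁) F)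
        ((e A : C₂) : Matrix (Fin m₂) (Fin n₂) F)
      map_add' := by
        intro A B
        simp only [Submodule.coe_add, map_add]
        exact auxEmbed_add _ _ _ _ _ _ _ _ _ _
      map_smul' := by
        intro c A
        simp only [Submodule.coe_smul, _root_.map_smul, RingHom.id_apply]
        exact auxEmbed_smul _ _ _ _ _ _ _ _ _ }
  have hΦ : ∀ A : C₁, Φ A = auxEmbed m₁ n₁ m₂ n₂ m₃ n₃ (A : Matrix (Fin m₁) (Fin n₁) F)
      ((e A : C₂) : Matrix (Fin m₂) (Fin n₂) F) := fun _ => rfl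
  have hinj : Function.Injective Φ := by
    refine LinearMap.ker_eq_bot.mp (LinearMap.ker_eq_bot'.mpr ?_)
    intro A hA
    have hA0 : (A : Matrix (Fin m₁) (Fin n₁) F) = 0 := by
      funext i j
      have h := congrFun (congrFun (hΦ A ▸ hA) ⟨(i : ℕ), by omega⟩) ⟨(j : ℕ), by omega⟩
      rw [auxEmbed, dif_pos ⟨i.isLt, j.isLt⟩] at h
      simpa using h
    exact Subtype.ext hA0
  refine ⟨LinearMap.range Φ, ?_, ?_, ?_⟩
  · rw [LinearMap.finrank_range_of_inj hinj, hC₁.1]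
  · rintro B ⟨A, rfl⟩ i j hle
    rw [hΦ, auxEmbed]
    simp only at hle ⊢
    split_ifs with h h'
    · rw [if_pos h.2] at hle
      exact hC₁.2.1 _ A.2 ⟨(i : ℕ), h.1⟩ ⟨(j : ℕ), h.2⟩ hle
    · split_ifs at hle with h1 h2
      · omega
      · omega
      · exact hC₂.2.1 _ (e A).2 ⟨(i : ℕ) - m₃, h'.2.2.1⟩
          ⟨(j : ℕ) - (n₁ + n₃ - n₂), h'.2.2.2⟩
          (show γ₂ ((j : ℕ) - (n₁ + n₃ - n₂)) ≤ (i : ℕ) - m₃ by omega)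
    · rfl
  · rintro B ⟨A, rfl⟩ hBne
    have hA0 : A ≠ 0 := fun h => hBne (h ▸ map_zero Φ)
    have h1 : δ₁ ≤ ((A : Matrix (Fin m₁) (Fin n₁) F)).rank :=
      hC₁.2.2 _ A.2 (fun h => hA0 (Subtype.ext h))
    have h2 : δ₂ ≤ (((e A : C₂)) : Matrix (Fin m₂) (Fin n₂) F).rank := by
      refine hC₂.2.2 _ (e A).2 (fun h => hA0 ?_)
      have : e A = 0 := Subtype.ext h
      simpa using e.map_eq_zero_iff.mp this
    calc δ₁ + δ₂ ≤ ((A : Matrix (Fin m₁) (Fin n₁) F)).rank +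
          (((e A : C₂)) : Matrix (Fin m₂) (Fin n₂) F).rank := add_le_add h1 h2
      _ ≤ (Matrix.fromBlocks (A : Matrix (Fin m₁) (Fin n₁) F) 0 0
            (((e A : C₂)) : Matrix (Fin m₂) (Fin n₂) F)).rank := aux_rank_fromBlocks _ _
      _ = ((auxEmbed m₁ n₁ m₂ n₂ m₃ n₃ (A : Matrix (Fin m₁) (Fin n₁) F)
            (((e A : C₂)) : Matrix (Fin m₂) (Fin n₂) F)).submatrix _ _).rank := by
          rw [auxEmbed_submatrix m₁ n₁ m₂ n₂ m₃ n₃ hm₃ hn₃]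
      _ ≤ (auxEmbed m₁ n₁ m₂ n₂ m₃ n₃ (A : Matrix (Fin m₁) (Fin n₁) F)
            (((e A : C₂)) : Matrix (Fin m₂) (Fin n₂) F)).rank := aux_rank_submatrix_le _ _ _
      _ = (Φ A).rank := by rw [hΦ]
end

section
/- For a subspace U ⊆ 𝔽_q^n define its pivot set P(U) ⊆ {1,…,n} by: j ∈ P(U) if and only if there exists u ∈ U with u_j ≠ 0 and u_i = 0 for all i < j (these are exactly the positions of the leading ones of the reduced row echelon form of a generator matrix of U, i.e. the positions of the ones in the identifying vector of U). Then for all subspaces U, V of 𝔽_q^n, d_S(U,V) ≥ |P(U) Δ P(V)|, where Δ denotes the symmetric difference; that is, the subspace distance between U and V is at least the Hamming distance between their identifying vectors. -/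
/-- The pivot set of a subspace `U ⊆ F^n`: the positions `j` for which some
`u ∈ U` has `u j ≠ 0` and `u i = 0` for all `i < j`. These are exactly the
positions of the leading ones of the reduced row echelon form of a generator
matrix of `U`, i.e. the positions of the ones of the identifying vector of `U`. -/
def pivotSet {F : Type} [Field F] {n : ℕ} (U : Submodule F (Fin n → F)) :
    Set (Fin n) :=
  {j | ∃ u ∈ U, u j ≠ 0 ∧ ∀ i, i < j → u i = 0}

open Module

section aux

variable {F : Type} [Field F] {n : ℕ}

/-- Restriction to the pivot coordinates is injective on `U`. -/
lemma finrank_le_ncard_pivotSet (U : Submodule F (Fin n → F)) :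
    finrank F U ≤ (pivotSet U).ncard := by
  classical
  haveI : Fintype (pivotSet U) := Fintype.ofFinite _
  let f : U →ₗ[F] ((pivotSet U) → F) :=
    { toFun := fun u j => (u : Fin n → F) j
      map_add' := fun u v => rfl
      map_smul' := fun c u => rfl }
  have hinj : Function.Injective f := by
    rw [← LinearMap.ker_eq_bot, LinearMap.ker_eq_bot']
    intro u hu
    ext1
    by_contra hne
    have hne' : {i : Fin n | (u : Fin n → F) i ≠ 0}.Nonempty := by
      by_contra h
      apply hne
      ext i
      by_contra hi
      exact h ⟨i, hi⟩
    obtain ⟨s, hs, hsne⟩ : ∃ s : Finset (Fin n),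
        (↑s = {i : Fin n | (u : Fin n → F) i ≠ 0}) ∧ s.Nonempty := by
      refine ⟨(Set.toFinite _).toFinset, Set.Finite.coe_toFinset _, ?_⟩
      rwa [← Set.Finite.toFinset_nonempty (Set.toFinite _)] at hne'
    set j := s.min' hsne with hj
    have hjmem : (u : Fin n → F) j ≠ 0 := by
      have := s.min'_mem hsne
      rw [← Finset.mem_coe, hs] at this
      exact this
    have hjpiv : j ∈ pivotSet U := by
      refine ⟨u, u.2, hjmem, fun i hij => ?_⟩
      by_contra hi
      have : i ∈ s := by rw [← Finset.mem_coe, hs]; exact hi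
      exact absurd (s.min'_le i this) (not_le.mpr hij)
    have := congrFun hu ⟨j, hjpiv⟩
    exact hjmem this
  calc finrank F U ≤ finrank F ((pivotSet U) → F) :=
        LinearMap.finrank_le_finrank_of_injective hinj
    _ = Fintype.card (pivotSet U) := Module.finrank_fintype_fun_eq_card F
    _ = (pivotSet U).ncard := by
          rw [Set.ncard_eq_toFinset_card', Set.toFinset_card]

lemma ncard_pivotSet_le_finrank (U : Submodule F (Fin n → F)) :
    (pivotSet U).ncard ≤ finrank F U := by
  classical
  haveI : Fintype (pivotSet U) := Fintype.ofFinite _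
  -- choose a witness for each pivot
  choose v hvU hvne hvlt using fun j : pivotSet U => (j.2 : ∃ u ∈ U,
    u (j : Fin n) ≠ 0 ∧ ∀ i, i < (j : Fin n) → u i = 0)
  let w : pivotSet U → U := fun j => ⟨v j, hvU j⟩
  have hli : LinearIndependent F w := by
    have : LinearIndependent F fun j : pivotSet U => ((w j : Fin n → F)) := by
      rw [Fintype.linearIndependent_iff]
      intro g hg i
      by_contra hgi
      have hsne : (Finset.univ.filter fun j => g j ≠ 0).Nonempty :=
        ⟨i, by simp [hgi]⟩
      set s := Finset.univ.filter fun j : pivotSet U => g j ≠ 0 with hsdef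
      set j := s.min' hsne with hjdef
      have hgj : g j ≠ 0 := (Finset.mem_filter.mp (s.min'_mem hsne)).2
      have := congrFun hg (j : Fin n)
      simp only [Finset.sum_apply, Pi.smul_apply, smul_eq_mul, Pi.zero_apply] at this
      rw [Finset.sum_eq_single j] at this
      · rcases mul_eq_zero.mp this with h | h
        · exact hgj h
        · exact hvne j h
      · intro b _ hbj
        by_cases hgb : g b = 0
        · simp [hgb]
        · have hbs : b ∈ s := by simp [hsdef, hgb]
          have hle : j ≤ b := s.min'_le b hbs
          have hlt : (j : Fin n) < (b : Fin n) := by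
            rcases lt_or_eq_of_le hle with h | h
            · exact h
            · exact absurd h.symm hbj
          rw [show ((w b : Fin n → F)) (j : Fin n) = v b j from rfl, hvlt b (j : Fin n) hlt, mul_zero]
      · intro h
        exact absurd (Finset.mem_univ j) h
    exact this.of_comp U.subtype
  have := hli.fintype_card_le_finrank
  rwa [Set.ncard_eq_toFinset_card', Set.toFinset_card]

end aux

/-- **The subspace distance is at least the Hamming distance of the identifying
vectors** (Etzion–Silberstein). For subspaces `U, V` of `F^n`,
`d_S(U, V) = dim U + dim V - 2 dim (U ⊓ V)` is at least the cardinality of the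
symmetric difference of the pivot sets of `U` and `V`. -/
theorem subspace_dist_ge_hamming_dist_of_pivots
    (F : Type) [Field F] [Fintype F] (n : ℕ)
    (U V : Submodule F (Fin n → F)) :
    (symmDiff (pivotSet U) (pivotSet V)).ncard ≤
      Module.finrank F U + Module.finrank F V
        - 2 * Module.finrank F ↥(U ⊓ V) := by
  classical
  set A := pivotSet U
  set B := pivotSet V
  have hsub : pivotSet (U ⊓ V) ⊆ A ∩ B := by
    rintro j ⟨u, hu, hne, hlt⟩
    exact ⟨⟨u, hu.1, hne, hlt⟩, ⟨u, hu.2, hne, hlt⟩⟩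
  have h1 : Module.finrank F ↥(U ⊓ V) ≤ (A ∩ B).ncard :=
    (finrank_le_ncard_pivotSet (U ⊓ V)).trans
      (Set.ncard_le_ncard hsub (Set.toFinite _))
  have h2 : (symmDiff A B).ncard + 2 * (A ∩ B).ncard = A.ncard + B.ncard := by
    have hst : symmDiff A B = (A ∪ B) \ (A ∩ B) := by
      rw [Set.symmDiff_def]
      ext x
      by_cases hx : x ∈ A <;> by_cases hy : x ∈ B <;> simp [hx, hy]
    have hsub2 : A ∩ B ⊆ A ∪ B := (Set.inter_subset_left).trans Set.subset_union_left
    rw [hst, Set.ncard_diff hsub2 (Set.toFinite _), two_mul]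
    have hiu : (A ∩ B).ncard ≤ (A ∪ B).ncard :=
      Set.ncard_le_ncard hsub2 (Set.toFinite _)
    have huni : (A ∪ B).ncard + (A ∩ B).ncard = A.ncard + B.ncard :=
      Set.ncard_union_add_ncard_inter A B (Set.toFinite _) (Set.toFinite _)
    omega
  have h3 : A.ncard ≤ Module.finrank F U := ncard_pivotSet_le_finrank U
  have h4 : B.ncard ≤ Module.finrank F V := ncard_pivotSet_le_finrank V
  omega
end

section
/- Let F be a field, t ≥ 1 an integer, 𝒞_1 a set of t×t matrices over F with rank(A − A') ≥ t for all distinct A, A' ∈ 𝒞_1, and 𝒞_2 a set of 2t×2t matrices over F with rank(B − B') ≥ 2t for all distinct B, B' ∈ 𝒞_2. For A ∈ 𝒞_1 and B ∈ 𝒞_2 let M(A,B) be the 3t×3t matrix over F whose entries in rows 1..t and columns 1..t form the block A, whose entries in rows 1..2t and columns t+1..3t form the block B, whose entries in rows 2t+1..3t and columns 2t+1..3t form the block A again, and which is zero elsewhere. Then the map (A,B) ↦ M(A,B) is injective and rank(M(A,B) − M(A',B')) ≥ 2t for all (A,B) ≠ (A',B') in 𝒞_1 × 𝒞_2; in particular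 {M(A,B) : A ∈ 𝒞_1, B ∈ 𝒞_2} is a rank metric code of cardinality |𝒞_1|·|𝒞_2| with pairwise rank distance at least 2t. -/
set_option linter.unnecessarySeqFocus false

/-- Any submatrix (arbitrary row and column selection) has rank at most that
of the original matrix. -/
lemma rank_submatrix_le_general {F : Type} [Field F] {m n l o : Type}
    [Fintype m] [Fintype n] [Fintype l] [Fintype o] [DecidableEq m] [DecidableEq n]
    (A : Matrix m n F) (f : l → m) (g : o → n) :
    (A.submatrix f g).rank ≤ A.rank := by
  have h1 : ((1 : Matrix m m F).submatrix f (Equiv.refl m)) * A = A.submatrix f id := by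
    rw [Matrix.one_submatrix_mul]
    rfl
  have h2 : (A.submatrix f id) * ((1 : Matrix n n F).submatrix (Equiv.refl n) g)
      = A.submatrix f g := by
    rw [Matrix.mul_submatrix_one]
    rfl
  calc (A.submatrix f g).rank
      = ((A.submatrix f id) * ((1 : Matrix n n F).submatrix (Equiv.refl n) g)).rank := by
        rw [h2]
    _ ≤ (A.submatrix f id).rank := Matrix.rank_mul_le_left _ _
    _ = (((1 : Matrix m m F).submatrix f (Equiv.refl m)) * A).rank := by rw [h1]
    _ ≤ A.rank := Matrix.rank_mul_le_right _ _

/-- A square matrix over a field with full rank is a unit. -/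
lemma full_rank_isUnit {F : Type} [Field F] {t : ℕ}
    (X : Matrix (Fin t) (Fin t) F) (h : t ≤ X.rank) : IsUnit X := by
  have hr : X.rank = t := le_antisymm (Matrix.rank_le_width X) h
  have htop : LinearMap.range X.mulVecLin = ⊤ := by
    apply Submodule.eq_top_of_finrank_eq
    rw [← Matrix.rank, hr, Module.finrank_fintype_fun_eq_card, Fintype.card_fin]
  rw [← Matrix.mulVec_surjective_iff_isUnit]
  intro v
  have : v ∈ LinearMap.range X.mulVecLin := htop ▸ Submodule.mem_top
  obtain ⟨u, hu⟩ := this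
  exact ⟨u, hu⟩



/-- The `3t × 3t` matrix `M(A, B) = [[A, B], [0, A]]` built from a `t × t`
matrix `A` and a `2t × 2t` matrix `B`: rows `0..t-1`, columns `0..t-1` carry
`A`; rows `0..2t-1`, columns `t..3t-1` carry `B`; rows `2t..3t-1`, columns
`2t..3t-1` carry `A` again; all other entries are zero. -/
def blockMRD {F : Type} [Field F] (t : ℕ)
    (A : Matrix (Fin t) (Fin t) F) (B : Matrix (Fin (2 * t)) (Fin (2 * t)) F) :
    Matrix (Fin (3 * t)) (Fin (3 * t)) F :=
  fun i j =>
    if h₁ : (i : ℕ) < t ∧ (j : ℕ) < t then A ⟨i, h₁.1⟩ ⟨j, h₁.2⟩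
    else if h₂ : (i : ℕ) < 2 * t ∧ t ≤ (j : ℕ) then
      B ⟨i, h₂.1⟩ ⟨(j : ℕ) - t, by have := j.isLt; omega⟩
    else if h₃ : 2 * t ≤ (i : ℕ) ∧ 2 * t ≤ (j : ℕ) then
      A ⟨(i : ℕ) - 2 * t, by have := i.isLt; omega⟩
        ⟨(j : ℕ) - 2 * t, by have := j.isLt; omega⟩
    else 0


lemma blockMRD_sub {F : Type} [Field F] (t : ℕ)
    (A A' : Matrix (Fin t) (Fin t) F) (B B' : Matrix (Fin (2 * t)) (Fin (2 * t)) F) :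
    blockMRD t A B - blockMRD t A' B' = blockMRD t (A - A') (B - B') := by
  ext i j
  simp only [Matrix.sub_apply, blockMRD]
  split_ifs <;> simp [Matrix.sub_apply]

lemma blockMRD_submatrix_B {F : Type} [Field F] (t : ℕ)
    (A : Matrix (Fin t) (Fin t) F) (B : Matrix (Fin (2 * t)) (Fin (2 * t)) F) :
    (blockMRD t A B).submatrix
      (fun i : Fin (2 * t) => (⟨i, by have := i.isLt; omega⟩ : Fin (3 * t)))
      (fun j : Fin (2 * t) => (⟨t + j, by have := j.isLt; omega⟩ : Fin (3 * t))) = B := by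
  ext i j
  simp only [Matrix.submatrix_apply, blockMRD]
  rw [dif_neg (by omega), dif_pos ⟨i.isLt, by omega⟩]
  congr 1 <;> apply Fin.ext <;> simp

lemma blockMRD_submatrix_A {F : Type} [Field F] (t : ℕ)
    (A : Matrix (Fin t) (Fin t) F) :
    (blockMRD t A 0).submatrix
      (Sum.elim (fun i : Fin t => (⟨i, by have := i.isLt; omega⟩ : Fin (3 * t)))
        (fun i : Fin t => (⟨2 * t + i, by have := i.isLt; omega⟩ : Fin (3 * t))))
      (Sum.elim (fun i : Fin t => (⟨i, by have := i.isLt; omega⟩ : Fin (3 * t)))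
        (fun i : Fin t => (⟨2 * t + i, by have := i.isLt; omega⟩ : Fin (3 * t))))
      = Matrix.fromBlocks A 0 0 A := by
  ext i j
  cases i with
  | inl i =>
    cases j with
    | inl j =>
      simp only [Matrix.submatrix_apply, Sum.elim_inl, Matrix.fromBlocks_apply₁₁]
      simp only [blockMRD]
      rw [dif_pos ⟨i.isLt, j.isLt⟩]
    | inr j =>
      simp only [Matrix.submatrix_apply, Sum.elim_inl, Sum.elim_inr,
        Matrix.fromBlocks_apply₁₂]
      simp only [blockMRD]
      rw [dif_neg (by omega), dif_pos ⟨by omega, by omega⟩]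
      simp
  | inr i =>
    cases j with
    | inl j =>
      simp only [Matrix.submatrix_apply, Sum.elim_inl, Sum.elim_inr,
        Matrix.fromBlocks_apply₂₁]
      simp only [blockMRD]
      rw [dif_neg (by omega), dif_neg (by omega), dif_neg (by omega)]
      simp
    | inr j =>
      simp only [Matrix.submatrix_apply, Sum.elim_inr, Matrix.fromBlocks_apply₂₂]
      simp only [blockMRD]
      rw [dif_neg (by omega), dif_neg (by omega), dif_pos ⟨by omega, by omega⟩]
      congr 1 <;> apply Fin.ext <;> simp

/-- **Block construction of rank metric codes.** Let `F` be a field, `t ≥ 1`,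
`C₁` a set of `t × t` matrices with pairwise rank distance at least `t`, and
`C₂` a set of `2t × 2t` matrices with pairwise rank distance at least `2t`.
Then `(A, B) ↦ M(A, B)` is injective on `C₁ × C₂` and
`rank (M(A,B) - M(A',B')) ≥ 2t` whenever `(A, B) ≠ (A', B')`; in particular
`{M(A,B) : A ∈ C₁, B ∈ C₂}` is a rank metric code of cardinality `|C₁| · |C₂|`
with minimum rank distance at least `2t`. -/
theorem blockMRD_rank_metric_code
    (F : Type) [Field F] (t : ℕ) (ht : 1 ≤ t)
    (C₁ : Set (Matrix (Fin t) (Fin t) F))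
    (C₂ : Set (Matrix (Fin (2 * t)) (Fin (2 * t)) F))
    (hC₁ : ∀ A ∈ C₁, ∀ A' ∈ C₁, A ≠ A' → t ≤ (A - A').rank)
    (hC₂ : ∀ B ∈ C₂, ∀ B' ∈ C₂, B ≠ B' → 2 * t ≤ (B - B').rank) :
    (∀ A ∈ C₁, ∀ B ∈ C₂, ∀ A' ∈ C₁, ∀ B' ∈ C₂,
      blockMRD t A B = blockMRD t A' B' → A = A' ∧ B = B') ∧
    (∀ A ∈ C₁, ∀ B ∈ C₂, ∀ A' ∈ C₁, ∀ B' ∈ C₂, (A, B) ≠ (A', B') →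
      2 * t ≤ (blockMRD t A B - blockMRD t A' B').rank) := by
  have key : ∀ A ∈ C₁, ∀ B ∈ C₂, ∀ A' ∈ C₁, ∀ B' ∈ C₂, (A, B) ≠ (A', B') →
      2 * t ≤ (blockMRD t A B - blockMRD t A' B').rank := by
    intro A hA B hB A' hA' B' hB' hne
    rw [blockMRD_sub]
    by_cases hBB : B = B'
    · -- then A ≠ A'
      have hAA : A ≠ A' := by
        intro h
        exact hne (by rw [h, hBB])
      have hX : t ≤ (A - A').rank := hC₁ A hA A' hA' hAA
      have hXu : IsUnit (A - A') := full_rank_isUnit _ hX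
      have hblock : IsUnit (Matrix.fromBlocks (A - A') 0 0 (A - A') :
          Matrix (Fin t ⊕ Fin t) (Fin t ⊕ Fin t) F) := by
        rw [Matrix.isUnit_iff_isUnit_det, Matrix.det_fromBlocks_zero₂₁]
        exact ((Matrix.isUnit_iff_isUnit_det _).mp hXu).mul
          ((Matrix.isUnit_iff_isUnit_det _).mp hXu)
      have hrank : (Matrix.fromBlocks (A - A') 0 0 (A - A') :
          Matrix (Fin t ⊕ Fin t) (Fin t ⊕ Fin t) F).rank = 2 * t := by
        rw [Matrix.rank_of_isUnit _ hblock, Fintype.card_sum, Fintype.card_fin]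
        omega
      rw [hBB, sub_self]
      calc 2 * t = (Matrix.fromBlocks (A - A') 0 0 (A - A') :
            Matrix (Fin t ⊕ Fin t) (Fin t ⊕ Fin t) F).rank := hrank.symm
        _ = ((blockMRD t (A - A') 0).submatrix
              (Sum.elim (fun i : Fin t => (⟨i, by have := i.isLt; omega⟩ : Fin (3 * t)))
                (fun i : Fin t => (⟨2 * t + i, by have := i.isLt; omega⟩ : Fin (3 * t))))
              (Sum.elim (fun i : Fin t => (⟨i, by have := i.isLt; omega⟩ : Fin (3 * t)))
                (fun i : Fin t => (⟨2 * t + i, by have := i.isLt; omega⟩ : Fin (3 * t))))).rank := by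
            rw [blockMRD_submatrix_A]
        _ ≤ (blockMRD t (A - A') 0).rank := rank_submatrix_le_general _ _ _
    · have hY : 2 * t ≤ (B - B').rank := hC₂ B hB B' hB' hBB
      calc 2 * t ≤ (B - B').rank := hY
        _ = ((blockMRD t (A - A') (B - B')).submatrix
              (fun i : Fin (2 * t) => (⟨i, by have := i.isLt; omega⟩ : Fin (3 * t)))
              (fun j : Fin (2 * t) => (⟨t + j, by have := j.isLt; omega⟩ : Fin (3 * t)))).rank := by
            rw [blockMRD_submatrix_B]
        _ ≤ (blockMRD t (A - A') (B - B')).rank := rank_submatrix_le_general _ _ _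
  refine ⟨?_, key⟩
  intro A hA B hB A' hA' B' hB' heq
  by_contra hcon
  have hne : (A, B) ≠ (A', B') := by
    intro h
    exact hcon ⟨congrArg Prod.fst h, congrArg Prod.snd h⟩
  have := key A hA B hB A' hA' B' hB' hne
  rw [heq, sub_self, Matrix.rank_zero] at this
  omega
end
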